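/- arXiv:math/0409288 — 17 statements merged into one kernel-verified Lean document; each statement's English description precedes it below -/
import Mathlib

section
/- For every natural number n and all convex subsets x, y_1, …, y_{n+2} of ℝⁿ, the relation D_{n+1}(x, y_1, …, y_{n+2}) holds, i.e. x ∩ convexHull(⋃_{i=1}^{n+2} y_i) = convexHull(⋃_{i=1}^{n+2} (x ∩ convexHull(⋃_{j≠i} y_j))). -/
/-- For every natural number `n` and all convex subsets `x, y₁, …, y_{n+2}` of `ℝⁿ`,
the relation `D_{n+1}(x, y₁, …, y_{n+2})` holds. -/
theorem conv_Dn_succ (n : ℕ) (x : Set (Fin n → ℝ)) (y : Fin (n + 2) → Set (Fin n → ℝ))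
    (hx : Convex ℝ x) (hy : ∀ i, Convex ℝ (y i)) :
    x ∩ convexHull ℝ (⋃ i, y i) =
      convexHull ℝ (⋃ i, x ∩ convexHull ℝ (⋃ j, ⋃ (_ : j ≠ i), y j)) := by
  apply Set.Subset.antisymm
  · rintro p ⟨hpx, hp⟩
    rw [convexHull_eq_union] at hp
    simp only [Set.mem_iUnion] at hp
    obtain ⟨t, hts, hai, hpt⟩ := hp
    -- card t ≤ n + 1
    have hcard : t.card ≤ n + 1 := by
      have := hai.card_le_finrank_succ
      have h2 : Module.finrank ℝ (vectorSpan ℝ (Set.range ((↑) : t → (Fin n → ℝ)))) ≤ n := by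
        calc _ ≤ Module.finrank ℝ (Fin n → ℝ) := Submodule.finrank_le _
        _ = n := Module.finrank_fin_fun ℝ
      simpa using this.trans (by omega)
    -- choose an index for each point of t
    have hchoice : ∀ a ∈ t, ∃ i, a ∈ y i := by
      intro a ha
      simpa using hts ha
    choose f hf using hchoice
    -- the image misses some index i
    let g : {a // a ∈ t} → Fin (n + 2) := fun a => f a.1 a.2
    have : (t.attach.image g).card < n + 2 := by
      calc _ ≤ t.attach.card := Finset.card_image_le
      _ = t.card := Finset.card_attach
      _ < n + 2 := by omega
    obtain ⟨i, hi⟩ : ∃ i, i ∉ t.attach.image g := by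
      by_contra h
      push_neg at h
      have : (Finset.univ : Finset (Fin (n + 2))) ⊆ t.attach.image g :=
        fun j _ => h j
      have := Finset.card_le_card this
      simp [Fintype.card_fin] at this
      omega
    apply subset_convexHull ℝ _
    refine Set.mem_iUnion.2 ⟨i, hpx, (convexHull_min ?_ (convex_convexHull ℝ _)) hpt⟩
    intro a ha
    apply subset_convexHull ℝ _
    simp only [Set.mem_iUnion]
    refine ⟨f a ha, ?_, hf a ha⟩
    intro hfa
    apply hi
    rw [← hfa]
    exact Finset.mem_image.2 ⟨⟨a, ha⟩, Finset.mem_attach _ _, rfl⟩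
  · apply convexHull_min _ (Convex.inter hx (convex_convexHull ℝ _))
    refine Set.iUnion_subset fun i => Set.inter_subset_inter_right _ ?_
    exact convexHull_mono (Set.iUnion_subset fun j => Set.iUnion_subset fun _ =>
      Set.subset_iUnion y j)
end

section
/- Let n > 0 and let x, y_1, …, y_{n+1} be convex subsets of ℝⁿ such that some two of the sets y_1, …, y_{n+1} with distinct indices have nonempty intersection. Then D_n(x, y_1, …, y_{n+1}) holds, i.e. x ∩ convexHull(⋃_{i=1}^{n+1} y_i) = convexHull(⋃_{i=1}^{n+1} (x ∩ convexHull(⋃_{j≠i} y_j))). -/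
open Finset

/-- Exchange lemma: if `p` is a convex combination `∑ Λ i • q i` with `q i ∈ y i`, and `z`
belongs to two distinct `y a`, `y b`, then `p` lies in the convex hull of the union of the
`y j` with one index `k` omitted. -/
lemma conv_exchange (n : ℕ) (y : Fin (n + 1) → Set (Fin n → ℝ))
    (a b : Fin (n + 1)) (hab : a ≠ b) (z : Fin n → ℝ) (hza : z ∈ y a) (hzb : z ∈ y b)
    (q : Fin (n + 1) → (Fin n → ℝ)) (hq : ∀ i, q i ∈ y i)
    (Λ : Fin (n + 1) → ℝ) (hΛ0 : ∀ i, 0 ≤ Λ i) (hΛ1 : ∑ i, Λ i = 1)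
    (p : Fin n → ℝ) (hp : p = ∑ i, Λ i • q i) :
    ∃ k, p ∈ convexHull ℝ (⋃ j, ⋃ (_ : j ≠ k), y j) := by
  -- the n+1 vectors q i - z are linearly dependent in ℝⁿ
  have hnli : ¬ LinearIndependent ℝ (fun i : Fin (n + 1) => q i - z) := by
    intro h
    have := h.fintype_card_le_finrank
    simp [Module.finrank_fin_fun] at this
  obtain ⟨g, hg, j₀, hj₀⟩ := Fintype.not_linearIndependent_iff.mp hnli
  have hgeq : ∑ i, g i • q i = (∑ i, g i) • z := by
    have : ∑ i, (g i • q i - g i • z) = 0 := by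
      simpa [smul_sub] using hg
    rw [Finset.sum_sub_distrib] at this
    rw [Finset.sum_smul]
    linear_combination (norm := module) this
  -- normalize the sign of the dependence
  obtain ⟨α, hαsum, ⟨i₁, hi₁⟩, hαeq⟩ :
      ∃ α : Fin (n + 1) → ℝ, 0 ≤ (∑ i, α i) ∧ (∃ i, 0 < α i) ∧
        ∑ i, α i • q i = (∑ i, α i) • z := by
    rcases lt_trichotomy (∑ i, g i) 0 with h | h | h
    · refine ⟨-g, ?_, ?_, ?_⟩
      · simp only [Pi.neg_apply, Finset.sum_neg_distrib]; linarith
      · by_contra hc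
        push_neg at hc
        have : (0:ℝ) ≤ ∑ i, g i := Finset.sum_nonneg fun i _ => by
          have := hc i; simp only [Pi.neg_apply] at this; linarith
        linarith
      · simp only [Pi.neg_apply, neg_smul, Finset.sum_neg_distrib]
        rw [hgeq]
    · rcases lt_or_gt_of_ne hj₀ with hneg | hpos
      · refine ⟨-g, by simp [h], ⟨j₀, by simpa using hneg⟩, ?_⟩
        simp only [Pi.neg_apply, neg_smul, Finset.sum_neg_distrib]
        rw [hgeq]
      · exact ⟨g, by linarith, ⟨j₀, hpos⟩, hgeq⟩
    · refine ⟨g, le_of_lt h, ?_, hgeq⟩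
      by_contra hc
      push_neg at hc
      have : ∑ i, g i ≤ 0 := Finset.sum_nonpos fun i _ => hc i
      linarith
  -- pick the minimizing index k
  set S : Finset (Fin (n + 1)) := Finset.univ.filter (fun i => 0 < α i) with hS
  have hSne : S.Nonempty := ⟨i₁, by simp [hS, hi₁]⟩
  obtain ⟨k, hkS, hkmin⟩ := S.exists_min_image (fun i => Λ i / α i) hSne
  have hαk : 0 < α k := by simpa [hS] using hkS
  set t : ℝ := Λ k / α k with ht
  have ht0 : 0 ≤ t := div_nonneg (hΛ0 k) hαk.le
  set μ : Fin (n + 1) → ℝ := fun i => Λ i - t * α i with hμ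
  have hμ0 : ∀ i, 0 ≤ μ i := by
    intro i
    by_cases hαi : 0 < α i
    · have := hkmin i (by simp [hS, hαi])
      have h2 : t * α i ≤ Λ i := by
        rw [div_le_div_iff₀ hαk hαi] at this
        rw [ht, div_mul_eq_mul_div, div_le_iff₀ hαk]
        linarith
      simp [hμ]; linarith
    · have : t * α i ≤ 0 := mul_nonpos_of_nonneg_of_nonpos ht0 (not_lt.mp hαi)
      have := hΛ0 i
      simp [hμ]; linarith
  have hμk : μ k = 0 := by
    simp [hμ, ht, div_mul_cancel₀ _ hαk.ne']
  set c : ℝ := t * ∑ i, α i with hc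
  have hc0 : 0 ≤ c := mul_nonneg ht0 hαsum
  have hsum1 : (∑ i, μ i) + c = 1 := by
    simp only [hμ, hc, Finset.sum_sub_distrib, ← Finset.mul_sum]
    linarith [hΛ1]
  have hcomb : ∑ i, μ i • q i + c • z = p := by
    have : ∑ i, μ i • q i = ∑ i, Λ i • q i - t • ∑ i, α i • q i := by
      rw [Finset.smul_sum, ← Finset.sum_sub_distrib]
      apply Finset.sum_congr rfl
      intro i _
      simp [hμ, sub_smul, smul_smul]
    rw [this, hαeq, hp, hc, smul_smul]
    module
  -- pick an index c₀ ≠ k with z ∈ y c₀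
  obtain ⟨c₀, hc₀k, hzc₀⟩ : ∃ c₀, c₀ ≠ k ∧ z ∈ y c₀ := by
    by_cases hak : a = k
    · exact ⟨b, fun hbk => hab (hak.trans hbk.symm), hzb⟩
    · exact ⟨a, hak, hza⟩
  refine ⟨k, ?_⟩
  -- exhibit p as a center of mass of points avoiding y k
  set W : Fin (n + 2) → ℝ := Fin.snoc μ c with hW
  set V : Fin (n + 2) → (Fin n → ℝ) :=
    Function.update (Fin.snoc q z) (Fin.castSucc k) z with hV
  have hWsum : ∑ i, W i = 1 := by
    rw [Fin.sum_univ_castSucc]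
    simp [hW, Fin.snoc_castSucc, Fin.snoc_last, hsum1]
  have hmemU : ∀ i : Fin (n + 2), V i ∈ ⋃ j, ⋃ (_ : j ≠ k), y j := by
    intro i
    by_cases hik : i = Fin.castSucc k
    · rw [hV, hik, Function.update_self]
      exact Set.mem_iUnion.2 ⟨c₀, Set.mem_iUnion.2 ⟨hc₀k, hzc₀⟩⟩
    · rw [hV, Function.update_of_ne hik]
      induction i using Fin.lastCases with
      | last =>
          rw [Fin.snoc_last]
          exact Set.mem_iUnion.2 ⟨c₀, Set.mem_iUnion.2 ⟨hc₀k, hzc₀⟩⟩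
      | cast j =>
          rw [Fin.snoc_castSucc]
          have hjk : j ≠ k := fun h => hik (by rw [h])
          exact Set.mem_iUnion.2 ⟨j, Set.mem_iUnion.2 ⟨hjk, hq j⟩⟩
  have hcm : (Finset.univ : Finset (Fin (n + 2))).centerMass W V = p := by
    rw [Finset.centerMass_eq_of_sum_1 _ _ hWsum]
    rw [Fin.sum_univ_castSucc]
    have h1 : ∀ i : Fin (n + 1), W (Fin.castSucc i) • V (Fin.castSucc i) = μ i • q i := by
      intro i
      by_cases hik : i = k
      · subst hik
        simp [hW, Fin.snoc_castSucc, hμk]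
      · rw [hW, hV, Function.update_of_ne (by simpa [Fin.castSucc_inj] using hik)]
        simp [Fin.snoc_castSucc]
    rw [Finset.sum_congr rfl fun i _ => h1 i]
    have h2 : W (Fin.last (n + 1)) • V (Fin.last (n + 1)) = c • z := by
      rw [hW, hV, Function.update_of_ne (by simp [Fin.ext_iff]; omega)]
      simp [Fin.snoc_last]
    rw [h2, hcomb]
  rw [← hcm]
  exact Finset.centerMass_mem_convexHull _ (fun i _ => by
      induction i using Fin.lastCases with
      | last => simpa [hW, Fin.snoc_last] using hc0
      | cast j => simpa [hW, Fin.snoc_castSucc] using hμ0 j)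
    (by rw [hWsum]; norm_num) (fun i _ => hmemU i)

/-- Key lemma: under the meeting hypothesis, every point of the hull of the union lies in the
hull of the union with one index omitted. -/
lemma conv_key (n : ℕ) (y : Fin (n + 1) → Set (Fin n → ℝ)) (hy : ∀ i, Convex ℝ (y i))
    (a b : Fin (n + 1)) (hab : a ≠ b) (z : Fin n → ℝ) (hza : z ∈ y a) (hzb : z ∈ y b)
    (p : Fin n → ℝ) (hp : p ∈ convexHull ℝ (⋃ i, y i)) :
    ∃ k, p ∈ convexHull ℝ (⋃ j, ⋃ (_ : j ≠ k), y j) := by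
  rw [_root_.convexHull_eq] at hp
  obtain ⟨ι, s, w, v, hw0, hw1, hv, hcm⟩ := hp
  classical
  -- index choice function
  have hvex : ∀ l ∈ s, ∃ i, v l ∈ y i := by
    intro l hl
    simpa [Set.mem_iUnion] using hv l hl
  set f : ι → Fin (n + 1) := fun l =>
    if h : ∃ i, v l ∈ y i then h.choose else a with hf
  have hfmem : ∀ l ∈ s, v l ∈ y (f l) := by
    intro l hl
    have h := hvex l hl
    simp only [hf, dif_pos h]
    exact h.choose_spec
  set Λ : Fin (n + 1) → ℝ := fun i => ∑ l ∈ s.filter (fun l => f l = i), w l with hΛ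
  have hΛ0 : ∀ i, 0 ≤ Λ i := fun i =>
    Finset.sum_nonneg fun l hl => hw0 l (Finset.mem_filter.mp hl).1
  have hΛ1 : ∑ i, Λ i = 1 := by
    rw [hΛ]
    rw [Finset.sum_fiberwise s f w]
    exact hw1
  by_cases hzero : ∃ k, Λ k = 0
  · obtain ⟨k, hk⟩ := hzero
    refine ⟨k, ?_⟩
    have hwz : ∀ l ∈ s.filter (fun l => f l = k), w l = 0 := by
      intro l hl
      exact (Finset.sum_eq_zero_iff_of_nonneg
        (fun l hl => hw0 l (Finset.mem_filter.mp hl).1)).mp hk l hl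
    set s' : Finset ι := s.filter (fun l => f l ≠ k) with hs'
    have hsum' : ∑ l ∈ s', w l = 1 := by
      have := Finset.sum_filter_add_sum_filter_not s (fun l => f l = k) w
      have h0 : ∑ l ∈ s.filter (fun l => f l = k), w l = 0 :=
        Finset.sum_eq_zero hwz
      rw [h0, zero_add] at this
      rw [hs', ← hw1]
      exact this
    have hps' : ∑ l ∈ s', w l • v l = p := by
      have hsplit := Finset.sum_filter_add_sum_filter_not s (fun l => f l = k)
        (fun l => w l • v l)
      have h0 : ∑ l ∈ s.filter (fun l => f l = k), w l • v l = 0 :=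
        Finset.sum_eq_zero fun l hl => by rw [hwz l hl, zero_smul]
      rw [h0, zero_add] at hsplit
      rw [hs', hsplit, ← hcm, Finset.centerMass_eq_of_sum_1 _ _ hw1]
    rw [← hps', ← Finset.centerMass_eq_of_sum_1 _ _ hsum']
    apply Finset.centerMass_mem_convexHull
    · intro l hl; exact hw0 l (Finset.mem_filter.mp hl).1
    · rw [hsum']; norm_num
    · intro l hl
      obtain ⟨hls, hlk⟩ := Finset.mem_filter.mp hl
      exact Set.mem_iUnion.2 ⟨f l, Set.mem_iUnion.2 ⟨hlk, hfmem l hls⟩⟩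
  · push_neg at hzero
    have hΛpos : ∀ i, 0 < Λ i := fun i => lt_of_le_of_ne (hΛ0 i) (Ne.symm (hzero i))
    set q : Fin (n + 1) → (Fin n → ℝ) :=
      fun i => (s.filter (fun l => f l = i)).centerMass w v with hq
    have hqmem : ∀ i, q i ∈ y i := by
      intro i
      have : q i ∈ convexHull ℝ (y i) := by
        apply Finset.centerMass_mem_convexHull
        · intro l hl; exact hw0 l (Finset.mem_filter.mp hl).1
        · exact hΛpos i
        · intro l hl
          obtain ⟨hls, hlk⟩ := Finset.mem_filter.mp hl
          rw [← hlk]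
          exact hfmem l hls
      rwa [(hy i).convexHull_eq] at this
    have hpsum : p = ∑ i, Λ i • q i := by
      have h1 : ∀ i, Λ i • q i = ∑ l ∈ s.filter (fun l => f l = i), w l • v l := by
        intro i
        rw [hq]
        simp only [Finset.centerMass]
        rw [show (∑ l ∈ s.filter (fun l => f l = i), w l) = Λ i from rfl,
          smul_inv_smul₀ (hΛpos i).ne']
      rw [Finset.sum_congr rfl fun i _ => h1 i, Finset.sum_fiberwise s f (fun l => w l • v l),
        ← hcm, Finset.centerMass_eq_of_sum_1 _ _ hw1]
    exact conv_exchange n y a b hab z hza hzb q hqmem Λ hΛ0 hΛ1 p hpsum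

/-- If `n > 0` and `x, y₁, …, y_{n+1}` are convex subsets of `ℝⁿ` such that some two of the
`y_i` with distinct indices have nonempty intersection, then `D_n(x, y₁, …, y_{n+1})` holds. -/
theorem conv_Dn_of_two_meet (n : ℕ) (hn : 0 < n) (x : Set (Fin n → ℝ))
    (y : Fin (n + 1) → Set (Fin n → ℝ))
    (hx : Convex ℝ x) (hy : ∀ i, Convex ℝ (y i))
    (hmeet : ∃ i j : Fin (n + 1), i ≠ j ∧ (y i ∩ y j).Nonempty) :
    x ∩ convexHull ℝ (⋃ i, y i) =
      convexHull ℝ (⋃ i, x ∩ convexHull ℝ (⋃ j, ⋃ (_ : j ≠ i), y j)) := by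
  obtain ⟨a, b, hab, z, hza, hzb⟩ := hmeet
  apply Set.Subset.antisymm
  · rintro p ⟨hpx, hpc⟩
    obtain ⟨k, hk⟩ := conv_key n y hy a b hab z hza hzb p hpc
    apply subset_convexHull
    exact Set.mem_iUnion.2 ⟨k, hpx, hk⟩
  · apply convexHull_min
    · apply Set.iUnion_subset
      intro i
      apply Set.inter_subset_inter_right
      apply convexHull_mono
      apply Set.iUnion_subset
      intro j
      apply Set.iUnion_subset
      intro _
      exact Set.subset_iUnion y j
    · exact hx.inter (convex_convexHull ℝ _)
end

section
/- For every n > 0 and all convex subsets x, y_1, …, y_{n+1} of ℝⁿ each containing the origin 0, the relation D_n(x, y_1, …, y_{n+1}) holds, i.e. x ∩ convexHull(⋃_{i=1}^{n+1} y_i) = convexHull(⋃_{i=1}^{n+1} (x ∩ convexHull(⋃_{j≠i} y_j))). (Thus the lattice Conv(ℝⁿ)_{≥{0}} of convex sets containing 0 satisfies the identity D_n.) -/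
/-!
By Carathéodory, a point `p` of `convexHull (⋃ i, y i)` lies in the hull of an affinely independent
`t ⊆ ⋃ i, y i`, which has at most `n + 1` points. Choose for each point of `t` an index `i` with the
point in `y i`. Either some index `i` is never chosen, and then `t ⊆ ⋃ j ≠ i, y j`, or every index
is chosen exactly once. Then `t` affinely spans `ℝⁿ`, so `0` is an affine combination of `t`;
pushing `p` away from `0` along this combination until a barycentric coordinate vanishes puts `p`
in the hull of `0` and a facet of `t`, and that facet misses an index.
-/
open Finset

theorem exists_sum_eq_one_sum_smul_eq_of_mem_affineSpan {k E : Type*} [Ring k] [AddCommGroup E]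
    [Module k E] {t : Finset E} {a : E} (ha : a ∈ affineSpan k (t : Set E)) :
    ∃ ν : E → k, ∑ e ∈ t, ν e = 1 ∧ ∑ e ∈ t, ν e • e = a := by
  classical
  obtain ⟨s, w, hst, hw, rfl⟩ :=
    eq_affineCombination_of_mem_affineSpan_image (p := id) (s := (t : Set E)) (by simpa using ha)
  have hst : s ⊆ t := by exact_mod_cast hst
  refine ⟨Set.indicator s w, ?_, ?_⟩
  · rwa [sum_indicator_subset _ hst]
  · rw [s.affineCombination_eq_linear_combination _ _ hw, ← sum_indicator_subset _ hst]
    exact sum_congr rfl fun e _ ↦ (Set.indicator_smul_apply_left (M := E) _ _ id e).symm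

variable {𝕜 E : Type*} [Field 𝕜] [LinearOrder 𝕜] [IsStrictOrderedRing 𝕜]
  [AddCommGroup E] [Module 𝕜 E]

theorem smul_add_sum_smul_mem_convexHull_insert {s : Finset E} {c : E → 𝕜} {τ : 𝕜} (a : E)
    (hτ : 0 ≤ τ) (hc : ∀ e ∈ s, 0 ≤ c e) (hsum : τ + ∑ e ∈ s, c e = 1) :
    τ • a + ∑ e ∈ s, c e • e ∈ convexHull 𝕜 (insert a (s : Set E)) := by
  have key := (convex_convexHull 𝕜 (insert a (s : Set E))).sum_mem (t := univ)
    (w := fun o : Option s ↦ o.elim τ (c ·)) (z := fun o ↦ o.elim a (↑))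
    (by rintro (_ | e) -; exacts [hτ, hc e e.2])
    (by simpa [Fintype.sum_option, sum_attach s c] using hsum)
    (by rintro (_ | e) - <;> apply subset_convexHull <;> simp)
  simpa [Fintype.sum_option, sum_attach s fun e ↦ c e • e] using key

theorem exists_mem_convexHull_insert_erase [DecidableEq E] {t : Finset E} {a p : E}
    (ha : a ∈ affineSpan 𝕜 (t : Set E)) (hp : p ∈ convexHull 𝕜 (t : Set E)) :
    ∃ q ∈ t, p ∈ convexHull 𝕜 (insert a (t.erase q : Set E)) := by
  obtain ⟨ν, hν1, hνa⟩ := exists_sum_eq_one_sum_smul_eq_of_mem_affineSpan ha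
  obtain ⟨l, hl0, hl1, rfl⟩ := Finset.mem_convexHull'.1 hp
  -- `τ` below is the largest factor for which `l - τ • ν` stays nonnegative on `t`
  obtain ⟨q, hq, hqmin⟩ : ∃ q ∈ {e ∈ t | 0 < ν e}, ∀ e ∈ {e ∈ t | 0 < ν e},
      l q / ν q ≤ l e / ν e := by
    refine exists_min_image _ _ ?_
    obtain ⟨e, he, hνe⟩ := exists_lt_of_sum_lt (f := fun _ ↦ (0 : 𝕜)) (g := ν) (s := t)
      (by simp [hν1])
    exact ⟨e, mem_filter.2 ⟨he, hνe⟩⟩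
  obtain ⟨hqt, hνq⟩ := mem_filter.1 hq
  set τ := l q / ν q
  set c := fun e ↦ l e - τ * ν e
  have hτ : 0 ≤ τ := div_nonneg (hl0 q hqt) hνq.le
  have hc : ∀ e ∈ t, 0 ≤ c e := by
    intro e he
    rcases le_or_gt (ν e) 0 with hνe | hνe
    · nlinarith [hl0 e he]
    · have := hqmin e (mem_filter.2 ⟨he, hνe⟩)
      rw [le_div_iff₀ hνe] at this
      simp only [c, sub_nonneg, this]
  have hcq : c q = 0 := by simp [c, τ, hνq.ne']
  have hsum : τ + ∑ e ∈ t.erase q, c e = 1 := by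
    rw [sum_erase _ hcq, sum_sub_distrib, ← mul_sum, hν1, hl1]; ring
  have hcomb : τ • a + ∑ e ∈ t.erase q, c e • e = ∑ e ∈ t, l e • e := by
    rw [sum_erase _ (by rw [hcq, zero_smul])]
    simp only [c, sub_smul, sum_sub_distrib, mul_smul, ← smul_sum, hνa]
    abel
  refine ⟨q, hqt, hcomb ▸ smul_add_sum_smul_mem_convexHull_insert a hτ ?_ hsum⟩
  exact fun e he ↦ hc e (mem_of_mem_erase he)

theorem exists_mem_convexHull_iUnion_ne_of_injective {ι : Type*} [Nontrivial ι] [DecidableEq E]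
    {y : ι → Set E} (hy0 : ∀ i, (0 : E) ∈ y i) {t : Finset E} {σ : t → ι}
    (hσ : Function.Injective σ) (hσy : ∀ e, (e : E) ∈ y (σ e))
    (h0 : (0 : E) ∈ affineSpan 𝕜 (t : Set E)) {p : E} (hp : p ∈ convexHull 𝕜 (t : Set E)) :
    ∃ i, p ∈ convexHull 𝕜 (⋃ j, ⋃ (_ : j ≠ i), y j) := by
  obtain ⟨q, hq, hpq⟩ := exists_mem_convexHull_insert_erase h0 hp
  refine ⟨σ ⟨q, hq⟩, convexHull_mono ?_ hpq⟩
  rintro e (rfl | he)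
  · obtain ⟨j, hj⟩ := exists_ne (σ ⟨q, hq⟩)
    exact Set.mem_iUnion₂.2 ⟨j, hj, hy0 j⟩
  · obtain ⟨hne, het⟩ := mem_erase.1 he
    exact Set.mem_iUnion₂.2 ⟨σ ⟨e, het⟩, hσ.ne (by simpa using hne), hσy _⟩

theorem exists_mem_convexHull_iUnion_ne [FiniteDimensional 𝕜 E] {ι : Type*} [Fintype ι]
    [Nontrivial ι] {y : ι → Set E} (hι : Module.finrank 𝕜 E < Fintype.card ι)
    (hy0 : ∀ i, (0 : E) ∈ y i) {p : E} (hp : p ∈ convexHull 𝕜 (⋃ i, y i)) :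
    ∃ i, p ∈ convexHull 𝕜 (⋃ j, ⋃ (_ : j ≠ i), y j) := by
  classical
  obtain ⟨t, hty, hti, hpt⟩ : ∃ t : Finset E, ↑t ⊆ ⋃ i, y i ∧
      AffineIndependent 𝕜 ((↑) : t → E) ∧ p ∈ convexHull 𝕜 (t : Set E) := by
    rw [convexHull_eq_union] at hp
    simpa only [Set.mem_iUnion, exists_prop] using hp
  choose σ hσ using fun e : t ↦ Set.mem_iUnion.1 (hty e.2)
  by_cases hsurj : Function.Surjective σ
  · have hιt := Fintype.card_le_of_surjective σ hsurj
    have hcard : Fintype.card t = Module.finrank 𝕜 E + 1 :=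
      le_antisymm (hti.card_le_finrank_succ.trans (by grw [Submodule.finrank_le]))
        (hι.trans_le hιt)
    have hinj := ((Fintype.bijective_iff_surjective_and_card σ).2 ⟨hsurj, by omega⟩).1
    have htop := hti.affineSpan_eq_top_iff_card_eq_finrank_add_one.2 hcard
    rw [Subtype.range_coe] at htop
    exact exists_mem_convexHull_iUnion_ne_of_injective hy0 hinj hσ (by simp [htop]) hpt
  · obtain ⟨i, hi⟩ := not_forall.1 hsurj
    refine ⟨i, convexHull_mono (fun e he ↦ Set.mem_iUnion₂.2 ⟨σ ⟨e, he⟩, ?_, hσ _⟩) hpt⟩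
    exact fun h ↦ hi ⟨_, h⟩

theorem conv_ge_zero_Dn_general (n : ℕ) (hn : 0 < n) (x : Set (Fin n → ℝ))
    (y : Fin (n + 1) → Set (Fin n → ℝ))
    (hx : Convex ℝ x) (hy0 : ∀ i, (0 : Fin n → ℝ) ∈ y i) :
    x ∩ convexHull ℝ (⋃ i, y i) =
      convexHull ℝ (⋃ i, x ∩ convexHull ℝ (⋃ j, ⋃ (_ : j ≠ i), y j)) := by
  have : Nontrivial (Fin (n + 1)) := Fin.nontrivial_iff_two_le.2 (by omega)
  refine Set.Subset.antisymm ?_ ?_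
  · rintro p ⟨hpx, hp⟩
    obtain ⟨i, hi⟩ := exists_mem_convexHull_iUnion_ne (by simp) hy0 hp
    exact subset_convexHull ℝ _ (Set.mem_iUnion.2 ⟨i, hpx, hi⟩)
  · refine convexHull_min (Set.iUnion_subset fun i ↦ ?_) (hx.inter (convex_convexHull ℝ _))
    exact Set.inter_subset_inter_right x
      (convexHull_mono (Set.iUnion₂_subset fun j _ ↦ Set.subset_iUnion y j))

/-- For every `n > 0` and all convex subsets `x, y₁, …, y_{n+1}` of `ℝⁿ` each containing the
origin, the relation `D_n(x, y₁, …, y_{n+1})` holds; thus `Conv(ℝⁿ)_{≥{0}}` satisfies `D_n`. -/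
theorem conv_ge_zero_Dn (n : ℕ) (hn : 0 < n) (x : Set (Fin n → ℝ))
    (y : Fin (n + 1) → Set (Fin n → ℝ))
    (hx : Convex ℝ x) (hy : ∀ i, Convex ℝ (y i))
    (hx0 : (0 : Fin n → ℝ) ∈ x) (hy0 : ∀ i, (0 : Fin n → ℝ) ∈ y i) :
    x ∩ convexHull ℝ (⋃ i, y i) =
      convexHull ℝ (⋃ i, x ∩ convexHull ℝ (⋃ j, ⋃ (_ : j ≠ i), y j)) :=
  conv_ge_zero_Dn_general n hn x y hx hy0
end

section
/- Let X be a set, let cl : Set X → Set X satisfy: S ⊆ cl S for all S; cl is monotone; cl(cl S) = cl S for all S; cl is finitary, i.e. cl S is the union of cl T over all finite subsets T ⊆ S; and cl {p} = {p} for every point p ∈ X. Let n be a positive integer. Then the following are equivalent: (a) for all cl-closed sets x, y_1, …, y_{n+1} ⊆ X (sets equal to their own closure), x ∩ cl(⋃_{i=1}^{n+1} y_i) = cl(⋃_{i=1}^{n+1} (x ∩ cl(⋃_{j≠i} y_j))); (b) for every S ⊆ X, cl S is the union of cl T over all subsets T ⊆ S with at most n elements. -/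
/-- For a finitary closure operator `cl` on a set `X` under which all singletons are closed,
and a positive integer `n`, the lattice of closed sets satisfies `D_n` if and only if `cl`
has the `n`-Carathéodory property. -/
theorem closed_sets_Dn_iff_caratheodory {X : Type*} (cl : Set X → Set X)
    (hext : ∀ S : Set X, S ⊆ cl S)
    (hmono : ∀ S T : Set X, S ⊆ T → cl S ⊆ cl T)
    (hidem : ∀ S : Set X, cl (cl S) = cl S)
    (hfin : ∀ S : Set X, cl S = ⋃ (T : Set X) (_ : T ⊆ S) (_ : T.Finite), cl T)
    (hsingle : ∀ p : X, cl {p} = {p})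
    (n : ℕ) (hn : 0 < n) :
    (∀ (x : Set X) (y : Fin (n + 1) → Set X), cl x = x → (∀ i, cl (y i) = y i) →
        x ∩ cl (⋃ i, y i) = cl (⋃ i, x ∩ cl (⋃ j, ⋃ (_ : j ≠ i), y j))) ↔
      (∀ S : Set X, cl S = ⋃ (T : Set X) (_ : T ⊆ S) (_ : T.Finite ∧ T.ncard ≤ n), cl T) := by
  classical
  constructor
  · -- (a) → (b)
    intro hDn S
    apply Set.Subset.antisymm
    · intro p hp
      rw [hfin S] at hp
      simp only [Set.mem_iUnion] at hp
      obtain ⟨T₀, hT₀S, hT₀fin, hpT₀⟩ := hp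
      suffices h : ∀ k : ℕ, ∀ T : Set X, T.Finite → T.ncard ≤ k → p ∈ cl T →
          ∃ T' : Set X, T' ⊆ T ∧ T'.Finite ∧ T'.ncard ≤ n ∧ p ∈ cl T' by
        obtain ⟨T', hsub, hfin', hcard, hmem⟩ := h T₀.ncard T₀ hT₀fin le_rfl hpT₀
        simp only [Set.mem_iUnion]
        exact ⟨T', hsub.trans hT₀S, ⟨hfin', hcard⟩, hmem⟩
      intro k
      induction k with
      | zero =>
        intro T hTfin hTcard hpT
        exact ⟨T, subset_rfl, hTfin, hTcard.trans (Nat.zero_le n), hpT⟩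
      | succ k ih =>
        intro T hTfin hTcard hpT
        by_cases hle : T.ncard ≤ n
        · exact ⟨T, subset_rfl, hTfin, hle, hpT⟩
        push_neg at hle
        -- pick n+1 distinct elements of T
        obtain ⟨A, hAT, hAcard⟩ := Set.exists_subset_card_eq hle
        have hAfin : A.Finite := hTfin.subset hAT
        have : Finite A := hAfin.to_subtype
        have hNA : Nat.card A = n + 1 := by
          rw [Nat.card_coe_set_eq]; exact hAcard
        let e : A ≃ Fin (n + 1) := Finite.equivFinOfCardEq hNA
        let a : Fin (n + 1) → X := fun i => (e.symm i : X)
        have haA : ∀ i, a i ∈ A := fun i => (e.symm i).2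
        have hainj : Function.Injective a :=
          Subtype.val_injective.comp e.symm.injective
        -- the pieces
        set Sp : Fin (n + 1) → Set X := fun i => (T \ A) ∪ {a i} with hSp
        have hSpT : ∀ i, Sp i ⊆ T := by
          intro i q hq
          rcases hq with hq | hq
          · exact hq.1
          · rcases hq; exact hAT (haA i)
        have hSpdiff : ∀ i j, j ≠ i → Sp j ⊆ T \ {a i} := by
          intro i j hji q hq
          rcases hq with hq | hq
          · exact ⟨hq.1, fun h => hq.2 (by rcases h; exact haA i)⟩
          · rw [Set.mem_singleton_iff] at hq
            subst hq
            refine ⟨hAT (haA j), fun h => hji (hainj ?_)⟩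
            rwa [Set.mem_singleton_iff] at h
        -- closure of the union of pieces is cl T
        have hUnion : cl (⋃ i, cl (Sp i)) = cl T := by
          apply Set.Subset.antisymm
          · have : (⋃ i, cl (Sp i)) ⊆ cl T := by
              apply Set.iUnion_subset
              intro i
              exact hmono _ _ (hSpT i)
            calc cl (⋃ i, cl (Sp i)) ⊆ cl (cl T) := hmono _ _ this
              _ = cl T := hidem T
          · apply hmono
            intro t ht
            by_cases htA : t ∈ A
            · refine Set.mem_iUnion.2 ⟨e ⟨t, htA⟩, hext _ (Or.inr ?_)⟩
              show t ∈ ({a (e ⟨t, htA⟩)} : Set X)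
              simp only [a, Equiv.symm_apply_apply, Set.mem_singleton_iff]
            · exact Set.mem_iUnion.2 ⟨0, hext _ (Or.inl ⟨ht, htA⟩)⟩
        -- apply D_n with x = {p}
        have hkey := hDn {p} (fun i => cl (Sp i)) (hsingle p) (fun i => hidem _)
        have hpmem : p ∈ ({p} : Set X) ∩ cl (⋃ i, cl (Sp i)) := by
          rw [hUnion]; exact ⟨rfl, hpT⟩
        rw [hkey] at hpmem
        have hstep : p ∈ cl (⋃ i, ({p} : Set X) ∩ cl (T \ {a i})) := by
          refine hmono _ _ ?_ hpmem
          apply Set.iUnion_mono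
          intro i
          apply Set.inter_subset_inter_right
          have hsub : (⋃ j, ⋃ (_ : j ≠ i), cl (Sp j)) ⊆ cl (T \ {a i}) := by
            apply Set.iUnion_subset; intro j; apply Set.iUnion_subset; intro hji
            exact hmono _ _ (hSpdiff i j hji)
          calc cl (⋃ j, ⋃ (_ : j ≠ i), cl (Sp j)) ⊆ cl (cl (T \ {a i})) :=
                hmono _ _ hsub
            _ = cl (T \ {a i}) := hidem _
        by_cases hex : ∃ i, p ∈ cl (T \ {a i})
        · obtain ⟨i, hi⟩ := hex
          have hlt : (T \ {a i}).ncard < T.ncard :=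
            Set.ncard_diff_singleton_lt_of_mem (hAT (haA i)) hTfin
          have hcard' : (T \ {a i}).ncard ≤ k := by omega
          obtain ⟨T', h1, h2, h3, h4⟩ :=
            ih (T \ {a i}) (hTfin.subset Set.diff_subset) hcard' hi
          exact ⟨T', h1.trans Set.diff_subset, h2, h3, h4⟩
        · push_neg at hex
          have hempty : (⋃ i, ({p} : Set X) ∩ cl (T \ {a i})) = ∅ := by
            apply Set.eq_empty_iff_forall_notMem.2
            intro q hq
            obtain ⟨i, hq1, hq2⟩ := Set.mem_iUnion.1 hq
            rcases hq1
            exact hex i hq2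
          rw [hempty] at hstep
          exact ⟨∅, Set.empty_subset _, Set.finite_empty,
            by simp, hstep⟩
    · apply Set.iUnion_subset; intro T
      apply Set.iUnion_subset; intro hTS
      apply Set.iUnion_subset; intro _
      exact hmono _ _ hTS
  · -- (b) → (a)
    intro hCar x y hx hy
    apply Set.Subset.antisymm
    · rintro p ⟨hpx, hpcl⟩
      rw [hCar (⋃ i, y i)] at hpcl
      simp only [Set.mem_iUnion] at hpcl
      obtain ⟨T, hTsub, ⟨hTfin, hTcard⟩, hpT⟩ := hpcl
      let g : X → Fin (n + 1) := fun t => if h : ∃ i, t ∈ y i then h.choose else 0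
      have hg : ∀ t ∈ T, t ∈ y (g t) := by
        intro t ht
        have h : ∃ i, t ∈ y i := Set.mem_iUnion.1 (hTsub ht)
        simp only [g, dif_pos h]
        exact h.choose_spec
      have hne : ∃ i₀ : Fin (n + 1), i₀ ∉ g '' T := by
        by_contra hcon
        push_neg at hcon
        have h1 : (Set.univ : Set (Fin (n + 1))).ncard ≤ (g '' T).ncard :=
          Set.ncard_le_ncard (fun i _ => hcon i) (Set.toFinite _)
        have h2 : (g '' T).ncard ≤ T.ncard := Set.ncard_image_le hTfin
        rw [Set.ncard_univ, Nat.card_eq_fintype_card, Fintype.card_fin] at h1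
        omega
      obtain ⟨i₀, hi₀⟩ := hne
      have hTsub' : T ⊆ ⋃ j, ⋃ (_ : j ≠ i₀), y j := by
        intro t ht
        have : g t ≠ i₀ := fun h => hi₀ ⟨t, ht, h⟩
        exact Set.mem_iUnion.2 ⟨g t, Set.mem_iUnion.2 ⟨this, hg t ht⟩⟩
      have : p ∈ x ∩ cl (⋃ j, ⋃ (_ : j ≠ i₀), y j) :=
        ⟨hpx, hmono _ _ hTsub' hpT⟩
      exact hext _ (Set.mem_iUnion.2 ⟨i₀, this⟩)
    · have hclosed : cl (x ∩ cl (⋃ i, y i)) = x ∩ cl (⋃ i, y i) := by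
        apply Set.Subset.antisymm _ (hext _)
        apply Set.subset_inter
        · calc cl (x ∩ cl (⋃ i, y i)) ⊆ cl x := hmono _ _ Set.inter_subset_left
            _ = x := hx
        · calc cl (x ∩ cl (⋃ i, y i)) ⊆ cl (cl (⋃ i, y i)) :=
              hmono _ _ Set.inter_subset_right
            _ = cl (⋃ i, y i) := hidem _
      have hsub : (⋃ i, x ∩ cl (⋃ j, ⋃ (_ : j ≠ i), y j)) ⊆ x ∩ cl (⋃ i, y i) := by
        apply Set.iUnion_subset
        intro i
        apply Set.inter_subset_inter_right
        apply hmono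
        apply Set.iUnion_subset; intro j; apply Set.iUnion_subset; intro _
        exact Set.subset_iUnion y j
      calc cl (⋃ i, x ∩ cl (⋃ j, ⋃ (_ : j ≠ i), y j))
          ⊆ cl (x ∩ cl (⋃ i, y i)) := hmono _ _ hsub
        _ = x ∩ cl (⋃ i, y i) := hclosed
end

section
/- For each positive integer n, the lattice Conv(ℝⁿ) does not satisfy the identity D_n: there exist convex subsets x, y_1, …, y_{n+1} of ℝⁿ such that x ∩ convexHull(⋃_{i=1}^{n+1} y_i) ≠ convexHull(⋃_{i=1}^{n+1} (x ∩ convexHull(⋃_{j≠i} y_j))). -/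
/-!
Take a simplex and its centroid: the centroid lies in the convex hull of all `n + 1` vertices,
but, the vertices being affinely independent, not even in the affine span of any proper subset of
them. So with `x` the centroid and `y i` the vertices, the left side of `D_n`
is `x` while every term `x ∩ convexHull (⋃ j ≠ i, y j)` on the right is empty.
-/

open Set

/-- The relation `D_m(x, y_1, …, y_{m+1})`, for a family `y` indexed by an arbitrary type. -/
def SatisfiesD {E ι : Type*} [AddCommGroup E] [Module ℝ E] (x : Set E) (y : ι → Set E) : Prop :=
  x ∩ convexHull ℝ (⋃ i, y i) = convexHull ℝ (⋃ i, x ∩ convexHull ℝ (⋃ j, ⋃ (_ : j ≠ i), y j))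

theorem Affine.Simplex.nonempty_of_finrank_eq {k V P : Type*} [DivisionRing k] [AddCommGroup V]
    [Module k V] [AddTorsor V P] [FiniteDimensional k V] {n : ℕ} (h : Module.finrank k V = n) :
    Nonempty (Affine.Simplex k P n) := by
  obtain ⟨b⟩ := AffineBasis.exists_affineBasis_of_finiteDimensional (k := k) (ι := Fin (n + 1))
    (P := P) (by simp [h])
  exact ⟨⟨b, b.ind⟩⟩

namespace Affine.Simplex

variable {E : Type*} [AddCommGroup E] [Module ℝ E] {m : ℕ} (s : Simplex ℝ E m)

theorem centroid_mem_convexHull : s.centroid ∈ convexHull ℝ (range s.points) := by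
  rw [centroid, Finset.centroid_eq_centerMass _ Finset.univ_nonempty]
  refine Finset.univ.centerMass_mem_convexHull (fun i _ => ?_) ?_ fun i _ => mem_range_self i
  · simp only [Finset.centroidWeights_apply, Finset.card_univ, Fintype.card_fin]
    positivity
  · rw [Finset.sum_centroidWeights_eq_one_of_nonempty _ _ Finset.univ_nonempty]
    exact one_pos

theorem centroid_notMem_convexHull_of_ne_univ {t : Set (Fin (m + 1))} (ht : t ≠ univ) :
    s.centroid ∉ convexHull ℝ (s.points '' t) :=
  fun h => s.centroid_notMem_affineSpan_of_ne_univ ht (convexHull_subset_affineSpan _ h)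

theorem not_satisfiesD_centroid : ¬ SatisfiesD {s.centroid} fun i => {s.points i} := by
  rw [SatisfiesD]
  have hfacet (i : Fin (m + 1)) :
      {s.centroid} ∩ convexHull ℝ (⋃ j, ⋃ (_ : j ≠ i), {s.points j}) = ∅ := by
    have himage : ⋃ j, ⋃ (_ : j ≠ i), {s.points j} = s.points '' {i}ᶜ := by
      simp [image_eq_iUnion]
    rw [singleton_inter_eq_empty, himage]
    exact s.centroid_notMem_convexHull_of_ne_univ (compl_ne_univ.2 (singleton_nonempty i))
  intro h
  have hc : s.centroid ∈ ({s.centroid} ∩ convexHull ℝ (⋃ i, {s.points i}) : Set E) :=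
    ⟨rfl, by simpa only [← range_eq_iUnion] using s.centroid_mem_convexHull⟩
  rw [h] at hc
  simp only [hfacet, iUnion_empty, convexHull_empty, mem_empty_iff_false] at hc

end Affine.Simplex

theorem conv_not_Dn_general (n : ℕ) :
    ∃ (x : Set (Fin n → ℝ)) (y : Fin (n + 1) → Set (Fin n → ℝ)),
      Convex ℝ x ∧ (∀ i, Convex ℝ (y i)) ∧
        x ∩ convexHull ℝ (⋃ i, y i) ≠
          convexHull ℝ (⋃ i, x ∩ convexHull ℝ (⋃ j, ⋃ (_ : j ≠ i), y j)) := by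
  obtain ⟨s⟩ := Affine.Simplex.nonempty_of_finrank_eq (P := Fin n → ℝ) (Module.finrank_fin_fun ℝ)
  exact ⟨{s.centroid}, fun i => {s.points i}, convex_singleton _, fun _ => convex_singleton _,
    s.not_satisfiesD_centroid⟩

/-- For each positive integer `n`, the lattice `Conv(ℝⁿ)` does not satisfy the identity `D_n`. -/
theorem conv_not_Dn (n : ℕ) (hn : 0 < n) :
    ∃ (x : Set (Fin n → ℝ)) (y : Fin (n + 1) → Set (Fin n → ℝ)),
      Convex ℝ x ∧ (∀ i, Convex ℝ (y i)) ∧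
        x ∩ convexHull ℝ (⋃ i, y i) ≠
          convexHull ℝ (⋃ i, x ∩ convexHull ℝ (⋃ j, ⋃ (_ : j ≠ i), y j)) :=
  conv_not_Dn_general n
end

section
/- For each positive integer n, the lattice Conv(ℝⁿ) satisfies the identity ((D_n) ∨ z) ∧ y_1 ∧ y_2: for all convex subsets x, y_1, …, y_{n+1}, z of ℝⁿ, convexHull((x ∩ convexHull(⋃_{i=1}^{n+1} y_i)) ∪ z) ∩ y_1 ∩ y_2 = convexHull((⋃_{i=1}^{n+1} (x ∩ convexHull(⋃_{j≠i} y_j))) ∪ z) ∩ y_1 ∩ y_2. -/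
/-!
If `a` is a convex combination of an affine basis `z₀, …, zₙ` of an `n`-dimensional space and
`p` is any point, then moving weight from the `zᵢ` onto `p` until some coefficient vanishes
writes `a` as a convex combination of `p` and all but one `zᵢ`. Applied to a Carathéodory simplex
of `a ∈ conv (y₁ ∪ ⋯ ∪ yₙ₊₁)` with `p ∈ y₁ ∩ y₂`, this puts `a` in the hull of all but one `yᵢ`.
So whenever `y₁ ∩ y₂` is nonempty, `conv (⋃ yᵢ) = ⋃ₖ conv (⋃_{j ≠ k} yⱼ)`, and after meeting with
`x` the two sets joined with `z` in the identity coincide.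
-/

open Set Finset

section

variable {𝕜 E : Type*} [Field 𝕜] [LinearOrder 𝕜] [IsStrictOrderedRing 𝕜]
  [AddCommGroup E] [Module 𝕜 E]

theorem exists_sum_smul_mem_convexHull_insert {ι : Type*} [Fintype ι] (z : ι → E) {w s : ι → 𝕜}
    (hw₀ : ∀ i, 0 ≤ w i) (hw₁ : ∑ i, w i = 1) (hs₁ : ∑ i, s i = 1) :
    ∃ i₀, ∑ i, w i • z i ∈ convexHull 𝕜 (insert (∑ i, s i • z i) (z '' {i₀}ᶜ)) := by
  classical
  set p := ∑ i, s i • z i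
  have hI : (univ.filter fun i => 0 < s i).Nonempty := by
    obtain ⟨i, -, hi⟩ := exists_lt_of_sum_lt (s := univ) (f := 0) (g := s) (by simp [hs₁])
    exact ⟨i, by simpa using hi⟩
  obtain ⟨i₀, hi₀, hmin⟩ := exists_min_image _ (fun i => w i / s i) hI
  have hsi₀ : 0 < s i₀ := (mem_filter.1 hi₀).2
  set t := w i₀ / s i₀
  have ht : 0 ≤ t := div_nonneg (hw₀ i₀) hsi₀.le
  have hc₀ : ∀ i, 0 ≤ w i - t * s i := by
    intro i
    rcases lt_or_ge 0 (s i) with hsi | hsi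
    · have := hmin i (mem_filter.2 ⟨mem_univ i, hsi⟩)
      rw [le_div_iff₀ hsi] at this
      linarith
    · nlinarith [hw₀ i]
  have hci₀ : w i₀ - t * s i₀ = 0 := by simp [t, hsi₀.ne']
  -- Trade weight `t` from `z i₀` to `p`; the coefficient of `z i₀` drops to zero.
  set u := Function.update (fun i => w i - t * s i) i₀ t
  set v := Function.update z i₀ p
  have huv : ∀ i, u i • v i = (w i - t * s i) • z i + if i = i₀ then t • p else 0 := by
    intro i
    by_cases h : i = i₀
    · subst h; simp [u, v, hci₀]
    · simp [u, v, h]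
  have hu : ∀ i, u i = (w i - t * s i) + if i = i₀ then t else 0 := by
    intro i
    by_cases h : i = i₀
    · subst h; simp [u, hci₀]
    · simp [u, h]
  refine ⟨i₀, ?_⟩
  have hsum : ∑ i, w i • z i = ∑ i, u i • v i := by
    simp only [huv, sum_add_distrib, sub_smul, sum_sub_distrib, mul_smul, ← smul_sum,
      sum_ite_eq', Finset.mem_univ, if_true]
    abel
  rw [hsum]
  refine (convex_convexHull 𝕜 _).sum_mem (fun i _ => ?_) ?_ (fun i _ => subset_convexHull 𝕜 _ ?_)
  · by_cases h : i = i₀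
    · subst h; simpa [u] using ht
    · simpa [u, h] using hc₀ i
  · simp only [hu, sum_add_distrib, sum_sub_distrib, ← mul_sum, sum_ite_eq', Finset.mem_univ,
      if_true, hw₁, hs₁]
    ring
  · by_cases h : i = i₀
    · subst h; simp [v]
    · exact mem_insert_of_mem _ ⟨i, h, (Function.update_of_ne h p z).symm⟩

variable [FiniteDimensional 𝕜 E] {κ : Type*} [Fintype κ]

theorem exists_mem_convexHull_iUnion_ne_s5 (hκ : Module.finrank 𝕜 E + 1 ≤ Fintype.card κ)
    (y : κ → Set E) {k₁ k₂ : κ} (hk : k₁ ≠ k₂) (hy : (y k₁ ∩ y k₂).Nonempty) {a : E}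
    (ha : a ∈ convexHull 𝕜 (⋃ k, y k)) :
    ∃ k, a ∈ convexHull 𝕜 (⋃ j, ⋃ (_ : j ≠ k), y j) := by
  obtain ⟨ι, _, z, w, hzy, hz, hw₀, hw₁, rfl⟩ := eq_pos_convex_span_of_mem_convexHull ha
  choose g hg using fun i => mem_iUnion.1 (hzy (mem_range_self i))
  have hzg : ∀ i k, g i ≠ k → z i ∈ ⋃ j, ⋃ (_ : j ≠ k), y j :=
    fun i k hik => mem_iUnion₂.2 ⟨g i, hik, hg i⟩
  by_cases hg_surj : g.Surjective
  · -- Every `y k` meets the Carathéodory simplex `z`, so `z` is an affine basis indexed by `κ`.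
    have hcard_ι : Fintype.card ι = Module.finrank 𝕜 E + 1 :=
      le_antisymm
        (hz.card_le_finrank_succ.trans (Nat.add_le_add_right (Submodule.finrank_le _) 1))
        (hκ.trans (Fintype.card_le_of_surjective g hg_surj))
    have hg_inj : g.Injective :=
      ((Fintype.bijective_iff_surjective_and_card g).2 ⟨hg_surj,
        le_antisymm (hcard_ι.trans_le hκ) (Fintype.card_le_of_surjective g hg_surj)⟩).1
    let b : AffineBasis ι 𝕜 E :=
      ⟨z, hz, hz.affineSpan_eq_top_iff_card_eq_finrank_add_one.2 hcard_ι⟩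
    obtain ⟨p, hp₁, hp₂⟩ := hy
    obtain ⟨i₀, hi₀⟩ := exists_sum_smul_mem_convexHull_insert z (fun i => (hw₀ i).le) hw₁
      (b.sum_coord_apply_eq_one p)
    rw [show ∑ i, b.coord i p • z i = p from b.linear_combination_coord_eq_self p] at hi₀
    refine ⟨g i₀, convexHull_mono (insert_subset_iff.2 ⟨?_, ?_⟩) hi₀⟩
    · by_cases h : k₁ = g i₀
      · exact mem_iUnion₂.2 ⟨k₂, h ▸ hk.symm, hp₂⟩
      · exact mem_iUnion₂.2 ⟨k₁, h, hp₁⟩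
    · rintro _ ⟨i, hi, rfl⟩
      exact hzg i _ (hg_inj.ne hi)
  · obtain ⟨k, hk⟩ := not_forall.1 hg_surj
    refine ⟨k, (convex_convexHull 𝕜 _).sum_mem (fun i _ => (hw₀ i).le) hw₁
      fun i _ => subset_convexHull 𝕜 _ (hzg i k fun h => hk ⟨i, h⟩)⟩

theorem convexHull_iUnion_eq_iUnion_convexHull_iUnion_ne
    (hκ : Module.finrank 𝕜 E + 1 ≤ Fintype.card κ) (y : κ → Set E) {k₁ k₂ : κ} (hk : k₁ ≠ k₂)
    (hy : (y k₁ ∩ y k₂).Nonempty) :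
    convexHull 𝕜 (⋃ k, y k) = ⋃ k, convexHull 𝕜 (⋃ j, ⋃ (_ : j ≠ k), y j) :=
  Subset.antisymm (fun _ ha => mem_iUnion.2 (exists_mem_convexHull_iUnion_ne_s5 hκ y hk hy ha))
    (iUnion_subset fun _ => convexHull_mono (iUnion₂_subset fun j _ => subset_iUnion y j))

end

theorem conv_Dn_join_meet_general (n : ℕ) (hn : 0 < n) (x : Set (Fin n → ℝ))
    (y : Fin (n + 1) → Set (Fin n → ℝ)) (z : Set (Fin n → ℝ)) :
    convexHull ℝ ((x ∩ convexHull ℝ (⋃ i, y i)) ∪ z) ∩ y 0 ∩ y 1 =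
      convexHull ℝ ((⋃ i, x ∩ convexHull ℝ (⋃ j, ⋃ (_ : j ≠ i), y j)) ∪ z) ∩ y 0 ∩ y 1 := by
  have hκ : Module.finrank ℝ (Fin n → ℝ) + 1 ≤ Fintype.card (Fin (n + 1)) := by simp
  have : NeZero n := ⟨hn.ne'⟩
  ext p
  simp only [mem_inter_iff, and_assoc]
  refine and_congr_left fun hp => ?_
  rw [← inter_iUnion,
    ← convexHull_iUnion_eq_iUnion_convexHull_iUnion_ne hκ y Fin.zero_ne_one' ⟨p, hp⟩]

/-- For each positive integer `n`, the lattice `Conv(ℝⁿ)` satisfies the identity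
`((D_n) ∨ z) ∧ y₁ ∧ y₂`. -/
theorem conv_Dn_join_meet (n : ℕ) (hn : 0 < n) (x : Set (Fin n → ℝ))
    (y : Fin (n + 1) → Set (Fin n → ℝ)) (z : Set (Fin n → ℝ))
    (hx : Convex ℝ x) (hy : ∀ i, Convex ℝ (y i)) (hz : Convex ℝ z) :
    convexHull ℝ ((x ∩ convexHull ℝ (⋃ i, y i)) ∪ z) ∩ y 0 ∩ y 1 =
      convexHull ℝ ((⋃ i, x ∩ convexHull ℝ (⋃ j, ⋃ (_ : j ≠ i), y j)) ∪ z) ∩ y 0 ∩ y 1 :=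
  conv_Dn_join_meet_general n hn x y z
end

section
/- For each integer n > 1, the lattice Conv(ℝⁿ)_{≥{0}} does not satisfy the identity ((D_{n−1}) ∨ z) ∧ y_1 ∧ y_2: there exist convex subsets x, y_1, …, y_n, z of ℝⁿ, each containing the origin 0, such that convexHull((x ∩ convexHull(⋃_{i=1}^{n} y_i)) ∪ z) ∩ y_1 ∩ y_2 ≠ convexHull((⋃_{i=1}^{n} (x ∩ convexHull(⋃_{j≠i} y_j))) ∪ z) ∩ y_1 ∩ y_2. -/
/-- For each integer `n > 1`, the lattice `Conv(ℝⁿ)_{≥{0}}` does not satisfy the identity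
`((D_{n-1}) ∨ z) ∧ y₁ ∧ y₂`. -/
theorem conv_ge_zero_not_Dn_join_meet (n : ℕ) (hn : 1 < n) :
    ∃ (x : Set (Fin n → ℝ)) (y : Fin n → Set (Fin n → ℝ)) (z : Set (Fin n → ℝ)),
      Convex ℝ x ∧ (∀ i, Convex ℝ (y i)) ∧ Convex ℝ z ∧
      (0 : Fin n → ℝ) ∈ x ∧ (∀ i, (0 : Fin n → ℝ) ∈ y i) ∧ (0 : Fin n → ℝ) ∈ z ∧
      convexHull ℝ ((x ∩ convexHull ℝ (⋃ i, y i)) ∪ z)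
          ∩ y ⟨0, by omega⟩ ∩ y ⟨1, by omega⟩ ≠
        convexHull ℝ ((⋃ i, x ∩ convexHull ℝ (⋃ j, ⋃ (_ : j ≠ i), y j)) ∪ z)
          ∩ y ⟨0, by omega⟩ ∩ y ⟨1, by omega⟩ := by
  classical
  have hn1 : (0:ℝ) < (n:ℝ) + 1 := by positivity
  set i0 : Fin n := ⟨0, by omega⟩ with hi0
  set i1 : Fin n := ⟨1, by omega⟩ with hi1
  set e : Fin n → (Fin n → ℝ) := fun i j => if j = i then 1 else 0 with he
  set p : Fin n → ℝ := fun i => if i = i0 then 2/((n:ℝ)+1) else 1/((n:ℝ)+1) with hp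
  set w : Fin n → ℝ := fun _ => -1 with hw
  set q : Fin n → ℝ := fun i => (p i - 1)/2 with hq
  set x : Set (Fin n → ℝ) := segment ℝ 0 p with hx
  set z : Set (Fin n → ℝ) := segment ℝ 0 w with hz
  set y : Fin n → Set (Fin n → ℝ) :=
    fun i => convexHull ℝ {0, e i, if (i:ℕ) ≤ 1 then q else 0} with hy
  have hppos : ∀ i, 0 < p i := by
    intro i; simp only [hp]; split <;> positivity
  have hplt : ∀ i, p i < 1 := by
    intro i
    simp only [hp]
    have h3 : (3:ℝ) ≤ (n:ℝ) + 1 := by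
      have : (2:ℝ) ≤ (n:ℝ) := by exact_mod_cast hn
      linarith
    split
    · rw [div_lt_one hn1]; linarith
    · rw [div_lt_one hn1]; linarith
  have hqneg : ∀ i, q i < 0 := by
    intro i; simp only [hq]; have := hplt i; linarith
  -- halfspace convexity
  have hhconv : ∀ i : Fin n, Convex ℝ {v : Fin n → ℝ | v i ≤ 0} :=
    fun i => convex_halfSpace_le ⟨fun _ _ => rfl, fun _ _ => rfl⟩ 0
  -- each y j (j ≠ i) lies in the halfspace v i ≤ 0
  have hyhalf : ∀ i j : Fin n, j ≠ i → y j ⊆ {v | v i ≤ 0} := by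
    intro i j hji
    apply convexHull_min _ (hhconv i)
    rintro v hv
    simp only [Set.mem_insert_iff, Set.mem_singleton_iff] at hv
    rcases hv with rfl | rfl | rfl
    · simp
    · simp only [he, Set.mem_setOf_eq]
      rw [if_neg (Ne.symm hji)]
    · split
      · exact le_of_lt (hqneg i)
      · simp
  -- small terms are {0}
  have hS : (⋃ i, x ∩ convexHull ℝ (⋃ j, ⋃ (_ : j ≠ i), y j)) ⊆ {(0 : Fin n → ℝ)} := by
    rintro v hv
    simp only [Set.mem_iUnion] at hv
    obtain ⟨i, hvx, hvh⟩ := hv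
    have hhalf : convexHull ℝ (⋃ j, ⋃ (_ : j ≠ i), y j) ⊆ {v : Fin n → ℝ | v i ≤ 0} := by
      apply convexHull_min _ (hhconv i)
      intro u hu
      simp only [Set.mem_iUnion] at hu
      obtain ⟨j, hji, hu⟩ := hu
      exact hyhalf i j hji hu
    rw [hx, segment_eq_image ℝ (0 : Fin n → ℝ) p] at hvx
    obtain ⟨θ, hθ, rfl⟩ := hvx
    have hvi := hhalf hvh
    simp only [Set.mem_setOf_eq, Pi.add_apply, Pi.smul_apply, Pi.zero_apply, smul_eq_mul,
      mul_zero, zero_add] at hvi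
    have hθ0 : θ = 0 := by
      have := hppos i
      rcases hθ with ⟨h0, h1⟩
      nlinarith
    subst hθ0
    simp
  -- RHS ⊆ z
  have hRHS : convexHull ℝ ((⋃ i, x ∩ convexHull ℝ (⋃ j, ⋃ (_ : j ≠ i), y j)) ∪ z) ⊆ z := by
    apply convexHull_min _ (convex_segment _ _)
    apply Set.union_subset _ subset_rfl
    refine hS.trans ?_
    simp only [Set.singleton_subset_iff]
    exact left_mem_segment ℝ _ _
  -- membership of coordinates of z
  have hzcoord : ∀ v ∈ z, v i0 = v i1 := by
    intro v hv
    rw [hz, segment_eq_image ℝ (0 : Fin n → ℝ) w] at hv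
    obtain ⟨θ, _, rfl⟩ := hv
    simp [hw]
  have hi01 : i1 ≠ i0 := by
    simp only [hi0, hi1, ne_eq, Fin.mk.injEq]
    omega
  have hqne : q i0 ≠ q i1 := by
    have h0 : q i0 = (2/((n:ℝ)+1) - 1)/2 := by simp [hq, hp]
    have h1 : q i1 = (1/((n:ℝ)+1) - 1)/2 := by simp [hq, hp, hi01]
    rw [h0, h1]
    intro h
    have hne : ((n:ℝ)+1) ≠ 0 := ne_of_gt hn1
    field_simp at h
    linarith
  have hqnz : q ∉ z := fun h => hqne (hzcoord q h)
  -- p ∈ convexHull (⋃ i, y i)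
  have hei : ∀ i, e i ∈ y i := fun i => subset_convexHull _ _ (by simp)
  have hsum : ∑ i : Fin n, p i = 1 := by
    have h : ∀ i : Fin n, p i = 1/((n:ℝ)+1) + (if i = i0 then 1/((n:ℝ)+1) else 0) := by
      intro i; simp only [hp]; split <;> ring
    simp only [h, Finset.sum_add_distrib, Finset.sum_const, Finset.sum_ite_eq',
      Finset.mem_univ, if_true, Finset.card_univ, Fintype.card_fin, nsmul_eq_mul]
    field_simp
  have hpe : p = ∑ i : Fin n, p i • e i := by
    funext j
    simp only [Finset.sum_apply, Pi.smul_apply, he, smul_eq_mul, mul_ite, mul_one, mul_zero]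
    simp
  have hpmem : p ∈ convexHull ℝ (⋃ i, y i) := by
    rw [hpe]
    exact (convex_convexHull ℝ _).sum_mem (fun i _ => le_of_lt (hppos i)) hsum
      (fun i _ => subset_convexHull _ _ (Set.mem_iUnion.2 ⟨i, hei i⟩))
  -- q ∈ LHS
  have hqL : q ∈ convexHull ℝ ((x ∩ convexHull ℝ (⋃ i, y i)) ∪ z) := by
    have hp' : p ∈ convexHull ℝ ((x ∩ convexHull ℝ (⋃ i, y i)) ∪ z) :=
      subset_convexHull _ _ (Or.inl ⟨right_mem_segment ℝ _ _, hpmem⟩)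
    have hw' : w ∈ convexHull ℝ ((x ∩ convexHull ℝ (⋃ i, y i)) ∪ z) :=
      subset_convexHull _ _ (Or.inr (right_mem_segment ℝ _ _))
    have hqc : q = (1/2 : ℝ) • p + (1/2 : ℝ) • w := by
      funext i
      simp only [hq, hw, Pi.add_apply, Pi.smul_apply, smul_eq_mul]
      ring
    rw [hqc]
    exact (convex_convexHull ℝ _) hp' hw' (by norm_num) (by norm_num) (by norm_num)
  have hqy0 : q ∈ y i0 := by
    apply subset_convexHull
    simp [hi0]
  have hqy1 : q ∈ y i1 := by
    apply subset_convexHull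
    simp [hi1]
  refine ⟨x, y, z, convex_segment _ _, fun i => convex_convexHull _ _, convex_segment _ _,
    left_mem_segment ℝ _ _, fun i => subset_convexHull _ _ (by simp), left_mem_segment ℝ _ _, ?_⟩
  intro hcontra
  have hqmem : q ∈ convexHull ℝ ((x ∩ convexHull ℝ (⋃ i, y i)) ∪ z) ∩ y i0 ∩ y i1 :=
    ⟨⟨hqL, hqy0⟩, hqy1⟩
  rw [hcontra] at hqmem
  exact hqnz (hRHS hqmem.1.1)
end

section
/- Let n be a natural number and let u, v, w be convex subsets of ℝⁿ with v ⊆ u. Then the following are equivalent: (a) there exists a convex set z ⊆ ℝⁿ such that convexHull(v ∪ z) ∩ w is a proper subset of convexHull(u ∪ z) ∩ w; (b) there exist a point p ∈ u and a point q ∈ w such that the ray drawn from q through p contains no point of v. -/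
/-!
If `x ∈ conv(u ∪ z) ∩ w` is not in `conv(v ∪ z)`, write `x` on a segment `[a, c]` with `a ∈ u`
and `c ∈ z`: every point `y` of the ray from `x` through `a` puts `x` on the segment `[y, c]`, so
`y ∉ v`. Conversely, take `z = {2q - p}`, the reflection of `p` in `q` (or `z = ∅` if `p = q`):
`q` is the midpoint of `p` and `2q - p`, while writing `q` on a segment `[y, 2q - p]` with
`y ∈ v` would put `y` on the ray from `q` through `p`.
-/

open Set

variable {𝕜 E : Type*} [Field 𝕜] [LinearOrder 𝕜] [IsStrictOrderedRing 𝕜] [AddCommGroup E]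
  [Module 𝕜 E] {u v z : Set E}

theorem mem_segment_two_smul_sub (p q : E) : q ∈ segment 𝕜 p ((2 : 𝕜) • q - p) := by
  rw [mem_segment_iff_sameRay, show (2 : 𝕜) • q - p - q = q - p by module]

theorem mem_segment_of_mem_segment_of_ray {a c x : E} (hx : x ∈ segment 𝕜 a c) {l : 𝕜}
    (hl : 0 ≤ l) : x ∈ segment 𝕜 (l • a + (1 - l) • x) c := by
  rw [mem_segment_iff_sameRay] at hx ⊢
  convert hx.nonneg_smul_left hl using 1
  module

theorem exists_ray_eq_of_mem_segment_two_smul_sub {p q y : E}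
    (h : q ∈ segment 𝕜 y ((2 : 𝕜) • q - p)) (hpq : p ≠ q) :
    ∃ l : 𝕜, 0 ≤ l ∧ l • p + (1 - l) • q = y := by
  rw [mem_segment_iff_sameRay, show (2 : 𝕜) • q - p - q = q - p by module] at h
  obtain ⟨l, hl, hyl⟩ := h.exists_nonneg_right (sub_ne_zero.2 hpq.symm)
  exact ⟨l, hl, by linear_combination (norm := module) hyl⟩

theorem exists_ray_notMem_of_mem_convexHull_union (hu : Convex 𝕜 u) (hz : Convex 𝕜 z) {x : E}
    (hx : x ∈ convexHull 𝕜 (u ∪ z)) (hxv : x ∉ convexHull 𝕜 (v ∪ z)) :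
    ∃ p ∈ u, ∀ l : 𝕜, 0 ≤ l → l • p + (1 - l) • x ∉ v := by
  rcases z.eq_empty_or_nonempty with rfl | hz₀
  · rw [union_empty, hu.convexHull_eq] at hx
    refine ⟨x, hx, fun l _ hl => hxv (subset_convexHull 𝕜 _ (Or.inl ?_))⟩
    rwa [← add_smul, add_sub_cancel, one_smul] at hl
  rcases u.eq_empty_or_nonempty with rfl | hu₀
  · exact absurd (convexHull_mono (union_subset_union_left z (empty_subset v)) hx) hxv
  rw [hu.convexHull_union hz hu₀ hz₀] at hx
  obtain ⟨a, ha, c, hc, hxac⟩ := mem_convexJoin.1 hx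
  refine ⟨a, ha, fun l hl hy => hxv ?_⟩
  exact segment_subset_convexHull (mem_union_left z hy) (mem_union_right v hc)
    (mem_segment_of_mem_segment_of_ray hxac hl)

theorem notMem_convexHull_union_two_smul_sub (hv : Convex 𝕜 v) {p q : E} (hpq : p ≠ q)
    (hray : ∀ l : 𝕜, 0 ≤ l → l • p + (1 - l) • q ∉ v) :
    q ∉ convexHull 𝕜 (v ∪ {(2 : 𝕜) • q - p}) := by
  intro hq
  rcases v.eq_empty_or_nonempty with rfl | hv₀
  · rw [empty_union, convexHull_singleton, mem_singleton_iff] at hq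
    exact hpq (by linear_combination (norm := module) hq)
  rw [hv.convexHull_union (convex_singleton _) hv₀ (singleton_nonempty _)] at hq
  obtain ⟨y, hy, _, rfl, hseg⟩ := mem_convexJoin.1 hq
  obtain ⟨l, hl, rfl⟩ := exists_ray_eq_of_mem_segment_two_smul_sub hseg hpq
  exact hray l hl hy

theorem conv_exists_join_meet_ssubset_iff_general (n : ℕ) (u v w : Set (Fin n → ℝ))
    (hu : Convex ℝ u) (hv : Convex ℝ v) (hvu : v ⊆ u) :
    (∃ z : Set (Fin n → ℝ), Convex ℝ z ∧
        convexHull ℝ (v ∪ z) ∩ w ⊂ convexHull ℝ (u ∪ z) ∩ w) ↔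
      (∃ p ∈ u, ∃ q ∈ w, ∀ l : ℝ, 0 ≤ l → l • p + (1 - l) • q ∉ v) := by
  constructor
  · rintro ⟨z, hz, hss⟩
    obtain ⟨x, ⟨hxu, hxw⟩, hxv⟩ := exists_of_ssubset hss
    obtain ⟨p, hp, hray⟩ :=
      exists_ray_notMem_of_mem_convexHull_union hu hz hxu fun h => hxv ⟨h, hxw⟩
    exact ⟨p, hp, x, hxw, hray⟩
  · rintro ⟨p, hp, q, hq, hray⟩
    have hmono (z : Set (Fin n → ℝ)) : convexHull ℝ (v ∪ z) ∩ w ⊆ convexHull ℝ (u ∪ z) ∩ w :=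
      inter_subset_inter_left w (convexHull_mono (union_subset_union_left z hvu))
    by_cases hpq : p = q
    · subst hpq
      refine ⟨∅, convex_empty, (ssubset_iff_of_subset (hmono ∅)).2
        ⟨p, ⟨subset_convexHull ℝ _ (Or.inl hp), hq⟩, fun h => ?_⟩⟩
      rw [union_empty, hv.convexHull_eq] at h
      exact hray 1 zero_le_one (by simpa using h.1)
    · refine ⟨{(2 : ℝ) • q - p}, convex_singleton _, (ssubset_iff_of_subset (hmono _)).2
        ⟨q, ⟨?_, hq⟩, fun h => notMem_convexHull_union_two_smul_sub hv hpq hray h.1⟩⟩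
      exact segment_subset_convexHull (mem_union_left _ hp) (mem_union_right u (mem_singleton _))
        (mem_segment_two_smul_sub p q)

/-- Lemma on strict inequalities `(u ∨ z) ∧ w > (v ∨ z) ∧ w` in `Conv(ℝⁿ)`:
such a `z` exists iff there are points `p ∈ u`, `q ∈ w` such that the ray drawn from `q`
through `p` contains no point of `v`. -/
theorem conv_exists_join_meet_ssubset_iff (n : ℕ) (u v w : Set (Fin n → ℝ))
    (hu : Convex ℝ u) (hv : Convex ℝ v) (hw : Convex ℝ w) (hvu : v ⊆ u) :
    (∃ z : Set (Fin n → ℝ), Convex ℝ z ∧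
        convexHull ℝ (v ∪ z) ∩ w ⊂ convexHull ℝ (u ∪ z) ∩ w) ↔
      (∃ p ∈ u, ∃ q ∈ w, ∀ l : ℝ, 0 ≤ l → l • p + (1 - l) • q ∉ v) :=
  conv_exists_join_meet_ssubset_iff_general n u v w hu hv hvu
end

section
/- Let V be a real vector space, let x be a convex subset of V, and let p be a point of V. Then there exists a convex subset w of V such that for every nonempty convex subset y of V, one has p ∈ convexHull(x ∪ y) if and only if y ∩ w is nonempty. -/
/-- Given a convex set `x` and a point `p` in a real vector space `V`, there is a convex set
`w` such that for every nonempty convex set `y`, `p ∈ convexHull (x ∪ y)` iff `y` meets `w`. -/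
theorem exists_convex_witness_set {V : Type*} [AddCommGroup V] [Module ℝ V]
    (x : Set V) (hx : Convex ℝ x) (p : V) :
    ∃ w : Set V, Convex ℝ w ∧
      ∀ y : Set V, Convex ℝ y → y.Nonempty →
        (p ∈ convexHull ℝ (x ∪ y) ↔ (y ∩ w).Nonempty) := by
  classical
  by_cases hpx : p ∈ x
  · refine ⟨Set.univ, convex_univ, fun y hy hy0 => ?_⟩
    simp only [Set.inter_univ]
    exact ⟨fun _ => hy0, fun _ => subset_convexHull ℝ _ (Set.mem_union_left _ hpx)⟩
  rcases Set.eq_empty_or_nonempty x with hx0 | hx0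
  · refine ⟨{p}, convex_singleton p, fun y hy hy0 => ?_⟩
    subst hx0
    rw [Set.empty_union, hy.convexHull_eq]
    constructor
    · intro hp; exact ⟨p, hp, rfl⟩
    · rintro ⟨b, hby, hbp⟩
      rw [Set.mem_singleton_iff] at hbp
      subst hbp; exact hby
  refine ⟨{b | ∃ a ∈ x, ∃ s : ℝ, 1 ≤ s ∧ b = a + s • (p - a)}, ?_, ?_⟩
  · rintro b₁ ⟨a₁, ha₁, s₁, hs₁, rfl⟩ b₂ ⟨a₂, ha₂, s₂, hs₂, rfl⟩ c d hc hd hcd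
    rcases eq_or_lt_of_le hc with rfl | hc'
    · have hd1 : d = 1 := by linarith
      subst hd1
      exact ⟨a₂, ha₂, s₂, hs₂, by module⟩
    rcases eq_or_lt_of_le hd with rfl | hd'
    · have hc1 : c = 1 := by linarith
      subst hc1
      exact ⟨a₁, ha₁, s₁, hs₁, by module⟩
    set s := c * s₁ + d * s₂ with hsdef
    have hs1 : 1 ≤ s := by nlinarith
    rcases eq_or_lt_of_le hs1 with hseq | hsgt
    · have h1 : s₁ = 1 := by nlinarith
      have h2 : s₂ = 1 := by nlinarith
      subst h1; subst h2
      exact ⟨a₁, ha₁, 1, le_refl 1, by match_scalars <;> linarith⟩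
    · have hsne : s - 1 ≠ 0 := by linarith
      set μ := c * (s₁ - 1) / (s - 1) with hμdef
      set ν := d * (s₂ - 1) / (s - 1) with hνdef
      have hμ : 0 ≤ μ := div_nonneg (by nlinarith) (by linarith)
      have hν : 0 ≤ ν := div_nonneg (by nlinarith) (by linarith)
      have hμν : μ + ν = 1 := by
        rw [hμdef, hνdef]
        field_simp
        ring_nf
        nlinarith [hcd]
      have k1 : μ * (s - 1) = c * (s₁ - 1) := by
        rw [hμdef]; field_simp
      have k2 : ν * (s - 1) = d * (s₂ - 1) := by
        rw [hνdef]; field_simp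
      refine ⟨μ • a₁ + ν • a₂, hx ha₁ ha₂ hμ hν hμν, s, hs1, ?_⟩
      match_scalars <;> nlinarith [k1, k2]
  · intro y hy hy0
    constructor
    · intro hp
      rw [convexHull_union hx0 hy0, hx.convexHull_eq, hy.convexHull_eq] at hp
      rw [mem_convexJoin] at hp
      obtain ⟨a, ha, b, hb, u, v, hu, hv, huv, hab⟩ := hp
      have hv0 : 0 < v := by
        rcases eq_or_lt_of_le hv with rfl | h
        · exfalso
          apply hpx
          have hu1 : u = 1 := by linarith
          have : a = p := by
            rw [← hab, hu1]
            simp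
          rwa [this] at ha
        · exact h
      refine ⟨b, hb, a, ha, 1 / v, ?_, ?_⟩
      · rw [le_div_iff₀ hv0]; linarith
      · have hvne : v ≠ 0 := ne_of_gt hv0
        rw [← hab]
        match_scalars <;> field_simp <;> linarith
    · rintro ⟨b, hb, a, ha, s, hs, rfl⟩
      have hsne : s ≠ 0 := by linarith
      have hseg : p ∈ segment ℝ a (a + s • (p - a)) := by
        refine ⟨1 - 1 / s, 1 / s, ?_, ?_, by ring, ?_⟩
        · have : 1 / s ≤ 1 := by
            rw [div_le_one (by linarith)]; linarith
          linarith
        · positivity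
        · match_scalars <;> field_simp <;> linarith
      exact (convex_convexHull ℝ (x ∪ y)).segment_subset
        (subset_convexHull ℝ _ (Set.mem_union_left _ ha))
        (subset_convexHull ℝ _ (Set.mem_union_right _ hb)) hseg
end

section
/- Let n be a natural number and let x, y_1, …, y_{n+1} be convex subsets of ℝⁿ such that the intersection ⋂_{i=1}^{n+1} y_i is nonempty. Then D_n^op(x, y_1, …, y_{n+1}) holds, i.e. convexHull(x ∪ ⋂_{i=1}^{n+1} y_i) = ⋂_{i=1}^{n+1} convexHull(x ∪ ⋂_{j≠i} y_j). -/
/-!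
Take `p` in the right-hand side. For each `i`, `p` lies in the convex hull of `x` and a single
point `b_i ∈ ⋂_{j ≠ i} y_j`. The points `q` with `p ∈ conv (x ∪ {q})` form a convex set `K`, for
any `x`. Radon's theorem applied to a common point `w` of the `y_j` and the `n + 1` points `b_i`
in `ℝⁿ` gives a point `m` in the hulls of both sides of a partition; the side without `w` puts `m`
in `K`, and for every `j` one of the two sides lies in `y_j`. Hence `p ∈ conv (x ∪ {m})` with
`m ∈ ⋂_j y_j`.
-/

open Set Module

section

variable {𝕜 E : Type*} [Field 𝕜] [LinearOrder 𝕜] [IsStrictOrderedRing 𝕜]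
  [AddCommGroup E] [Module 𝕜 E]

theorem convex_setOf_mem_convexHull_insert (x : Set E) (p : E) :
    Convex 𝕜 {q | p ∈ convexHull 𝕜 (insert q x)} := by
  intro q₁ hq₁ q₂ hq₂ l μ hl hμ hlμ
  rcases x.eq_empty_or_nonempty with rfl | hx
  · simp only [insert_empty_eq, convexHull_singleton, mem_ofPred_eq, mem_singleton_iff] at hq₁ hq₂ ⊢
    rw [← hq₁, ← hq₂, Convex.combo_self hlμ]
  simp only [mem_ofPred_eq, convexHull_insert hx, mem_convexJoin, mem_singleton_iff,
    exists_eq_left] at hq₁ hq₂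
  obtain ⟨a₁, ha₁, s₁, t₁, hs₁, ht₁, hst₁, hp₁⟩ := hq₁
  obtain ⟨a₂, ha₂, s₂, t₂, hs₂, ht₂, hst₂, hp₂⟩ := hq₂
  set q := l • q₁ + μ • q₂
  show p ∈ convexHull 𝕜 (insert q x)
  have hC : ∀ a ∈ convexHull 𝕜 x, a ∈ convexHull 𝕜 (insert q x) :=
    fun a ha => convexHull_mono (subset_insert q x) ha
  rcases hs₁.eq_or_lt with rfl | hs₁
  · rw [← hp₁, zero_smul, zero_add, (by linarith : t₁ = 1), one_smul]
    exact hC a₁ ha₁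
  rcases hs₂.eq_or_lt with rfl | hs₂
  · rw [← hp₂, zero_smul, zero_add, (by linarith : t₂ = 1), one_smul]
    exact hC a₂ ha₂
  -- eliminating `q₁` and `q₂` exhibits `p` as a positive combination of `q`, `a₁` and `a₂`
  let w : Fin 3 → 𝕜 := ![s₁ * s₂, l * t₁ * s₂, μ * t₂ * s₁]
  have hw₀ : ∀ i ∈ Finset.univ, 0 ≤ w i := by
    intro i _
    fin_cases i <;> simp only [w, Fin.zero_eta, Fin.mk_one, Fin.reduceFinMk, Matrix.cons_val] <;>
      positivity
  have hws : 0 < ∑ i, w i := by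
    simp only [Fin.sum_univ_three, w, Matrix.cons_val]
    positivity
  have hp : Finset.univ.centerMass w ![q, a₁, a₂] = p := by
    have hsum : ∑ i, w i • ![q, a₁, a₂] i = (∑ i, w i) • p := by
      simp only [Fin.sum_univ_three, w, q, Matrix.cons_val, smul_add, smul_smul]
      linear_combination (norm := module) (l * s₂) • hp₁ + (μ * s₁) • hp₂ +
        (s₁ * s₂ * hlμ - l * s₂ * hst₁ - μ * s₁ * hst₂) • p
    rw [Finset.centerMass, hsum, inv_smul_smul₀ hws.ne']
  rw [← hp]
  refine (convex_convexHull 𝕜 (insert q x)).centerMass_mem hw₀ hws ?_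
  intro i _
  fin_cases i
  · exact subset_convexHull 𝕜 _ (mem_insert q x)
  · exact hC a₁ ha₁
  · exact hC a₂ ha₂

theorem exists_mem_and_mem_convexHull_insert_of_mem_convexHull_union {x t : Set E} {p : E}
    (ht : Convex 𝕜 t) (ht₀ : t.Nonempty) (hp : p ∈ convexHull 𝕜 (x ∪ t)) :
    ∃ b ∈ t, p ∈ convexHull 𝕜 (insert b x) := by
  rcases x.eq_empty_or_nonempty with rfl | hx
  · rw [empty_union, ht.convexHull_eq] at hp
    exact ⟨p, hp, subset_convexHull 𝕜 _ (mem_insert p ∅)⟩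
  rw [convexHull_union hx ht₀, ht.convexHull_eq] at hp
  obtain ⟨a, ha, b, hb, hpab⟩ := mem_convexJoin.1 hp
  refine ⟨b, hb, (convex_convexHull 𝕜 _).segment_subset ?_ ?_ hpab⟩
  · exact convexHull_mono (subset_insert b x) ha
  · exact subset_convexHull 𝕜 _ (mem_insert b x)

variable {ι : Type*} [Fintype ι]

theorem exists_mem_inter_iInter_of_mem_iInter_ne [FiniteDimensional 𝕜 E] {K : Set E}
    {y : ι → Set E} (hcard : finrank 𝕜 E < Fintype.card ι) (hK : Convex 𝕜 K)
    (hy : ∀ i, Convex 𝕜 (y i)) {w : E} (hw : w ∈ ⋂ i, y i) {b : ι → E} (hbK : ∀ i, b i ∈ K)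
    (hby : ∀ i, b i ∈ ⋂ j, ⋂ (_ : j ≠ i), y j) :
    (K ∩ ⋂ i, y i).Nonempty := by
  let f : Option ι → E := fun o => o.elim w b
  have hf : ¬AffineIndependent 𝕜 f := fun hf => by
    have := hf.card_le_finrank_succ.trans
      (Nat.add_le_add_right (Submodule.finrank_le (vectorSpan 𝕜 (range f))) 1)
    rw [Fintype.card_option] at this
    omega
  have hfy : ∀ j s, some j ∉ s → f '' s ⊆ y j := by
    rintro j s hjs _ ⟨_ | i, hi, rfl⟩
    · exact mem_iInter.1 hw j
    · exact mem_iInter₂.1 (hby i) j (by rintro rfl; exact hjs hi)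
  obtain ⟨J, hJ, m, hmJ, hmJc⟩ : ∃ J : Set (Option ι), none ∉ J ∧
      (convexHull 𝕜 (f '' J) ∩ convexHull 𝕜 (f '' Jᶜ)).Nonempty := by
    obtain ⟨I, hI⟩ := Convex.radon_partition hf
    by_cases h : none ∈ I
    · exact ⟨Iᶜ, not_not.2 h, by rwa [compl_compl, inter_comm]⟩
    · exact ⟨I, h, hI⟩
  refine ⟨m, convexHull_min ?_ hK hmJ, mem_iInter.2 fun j => ?_⟩
  · rintro _ ⟨_ | i, hi, rfl⟩
    · exact absurd hi hJ
    · exact hbK i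
  by_cases hj : some j ∈ J
  · exact convexHull_min (hfy j _ (not_not.2 hj)) (hy j) hmJc
  · exact convexHull_min (hfy j _ hj) (hy j) hmJ

theorem convexHull_union_iInter_eq_iInter_convexHull_union [FiniteDimensional 𝕜 E]
    (hcard : finrank 𝕜 E < Fintype.card ι) (x : Set E) {y : ι → Set E}
    (hy : ∀ i, Convex 𝕜 (y i)) (hne : (⋂ i, y i).Nonempty) :
    convexHull 𝕜 (x ∪ ⋂ i, y i) = ⋂ i, convexHull 𝕜 (x ∪ ⋂ j, ⋂ (_ : j ≠ i), y j) := by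
  have hsub : ∀ i, ⋂ j, y j ⊆ ⋂ j, ⋂ (_ : j ≠ i), y j := fun i =>
    subset_iInter₂ fun j _ => iInter_subset y j
  refine (subset_iInter fun i => convexHull_mono (union_subset_union_right x (hsub i))).antisymm ?_
  intro p hp
  choose b hby hbp using fun i =>
    exists_mem_and_mem_convexHull_insert_of_mem_convexHull_union
      (convex_iInter₂ fun j _ => hy j) (hne.mono (hsub i)) (mem_iInter.1 hp i)
  obtain ⟨m, hmp, hmy⟩ := exists_mem_inter_iInter_of_mem_iInter_ne hcard
    (convex_setOf_mem_convexHull_insert x p) hy hne.some_mem hbp hby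
  exact convexHull_mono (insert_subset (mem_union_right x hmy) subset_union_left) hmp

end

theorem conv_Dn_op_of_inter_nonempty_general (n : ℕ) (x : Set (Fin n → ℝ))
    (y : Fin (n + 1) → Set (Fin n → ℝ))
    (hy : ∀ i, Convex ℝ (y i))
    (hne : (⋂ i, y i).Nonempty) :
    convexHull ℝ (x ∪ ⋂ i, y i) =
      ⋂ i, convexHull ℝ (x ∪ ⋂ j, ⋂ (_ : j ≠ i), y j) :=
  convexHull_union_iInter_eq_iInter_convexHull_union (by simp) x hy hne

/-- If `x, y₁, …, y_{n+1}` are convex subsets of `ℝⁿ` with `⋂ᵢ yᵢ` nonempty, then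
`D_n^op(x, y₁, …, y_{n+1})` holds. -/
theorem conv_Dn_op_of_inter_nonempty (n : ℕ) (x : Set (Fin n → ℝ))
    (y : Fin (n + 1) → Set (Fin n → ℝ))
    (hx : Convex ℝ x) (hy : ∀ i, Convex ℝ (y i))
    (hne : (⋂ i, y i).Nonempty) :
    convexHull ℝ (x ∪ ⋂ i, y i) =
      ⋂ i, convexHull ℝ (x ∪ ⋂ j, ⋂ (_ : j ≠ i), y j) :=
  conv_Dn_op_of_inter_nonempty_general n x y hy hne
end

section
/- For every positive integer n and all convex subsets x, y_1, …, y_{n+1} of ℝⁿ each containing the origin 0, the relation D_n^op(x, y_1, …, y_{n+1}) holds, i.e. convexHull(x ∪ ⋂_{i=1}^{n+1} y_i) = ⋂_{i=1}^{n+1} convexHull(x ∪ ⋂_{j≠i} y_j). (Thus the lattice Conv(ℝⁿ)_{≥{0}} of convex sets containing 0 satisfies the identity D_n^op.) -/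
/-!
Write a point `p` of the right-hand side as `p ∈ [aᵢ, bᵢ]` with `aᵢ ∈ x` and
`bᵢ ∈ ⋂_{j ≠ i} y_j`. The `n + 2` points `0, b₁, …, b_{n+1}` of `ℝⁿ` have a Radon partition; its
common point `c` is a convex combination of the `bᵢ` (use the part avoiding `0`), and `c ∈ y_j`
for every `j` because one of the two parts avoids `b_j` and all the other points lie in `y_j`.
Finally, the set of `q` with `p ∈ [a, q]` for some `a ∈ x` is convex, so it contains `c`.
-/

open Set

section

variable {𝕜 E : Type*} [Field 𝕜] [LinearOrder 𝕜] [IsStrictOrderedRing 𝕜]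
  [AddCommGroup E] [Module 𝕜 E]

theorem exists_nonneg_eq_add_smul_sub_of_mem_segment {p a q : E} (hpa : p ≠ a)
    (h : p ∈ segment 𝕜 a q) : ∃ r : 𝕜, 0 ≤ r ∧ q = p + r • (p - a) := by
  obtain ⟨r, hr, hq⟩ := (mem_segment_iff_sameRay.1 h).exists_nonneg_left (sub_ne_zero.2 hpa)
  exact ⟨r, hr, by rw [hq]; abel⟩

theorem mem_segment_add_smul_sub {p a : E} {r : 𝕜} (hr : 0 ≤ r) :
    p ∈ segment 𝕜 a (p + r • (p - a)) := by
  rw [mem_segment_iff_sameRay, add_sub_cancel_left]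
  exact SameRay.sameRay_nonneg_smul_right _ hr

/-- Apart from the trivial case `p ∈ x`, this set is `p` plus the cone spanned by `p - x`. -/
theorem Convex.convex_setOf_exists_mem_segment {x : Set E} (hx : Convex 𝕜 x) (p : E) :
    Convex 𝕜 {q | ∃ a ∈ x, p ∈ segment 𝕜 a q} := by
  by_cases hp : p ∈ x
  · convert convex_univ (𝕜 := 𝕜) (E := E)
    exact eq_univ_of_forall fun q => ⟨p, hp, left_mem_segment 𝕜 p q⟩
  rintro _ ⟨a₁, ha₁, h₁⟩ _ ⟨a₂, ha₂, h₂⟩ s t hs ht hst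
  obtain ⟨r₁, hr₁, rfl⟩ :=
    exists_nonneg_eq_add_smul_sub_of_mem_segment (ne_of_mem_of_not_mem ha₁ hp).symm h₁
  obtain ⟨r₂, hr₂, rfl⟩ :=
    exists_nonneg_eq_add_smul_sub_of_mem_segment (ne_of_mem_of_not_mem ha₂ hp).symm h₂
  have hst' : s • p + t • p = p := by rw [← add_smul, hst, one_smul]
  rcases (add_nonneg (mul_nonneg hs hr₁) (mul_nonneg ht hr₂)).eq_or_lt with hR | hR
  · obtain ⟨h₁, h₂⟩ :=
      (add_eq_zero_iff_of_nonneg (mul_nonneg hs hr₁) (mul_nonneg ht hr₂)).1 hR.symm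
    refine ⟨a₁, ha₁, ?_⟩
    convert right_mem_segment 𝕜 a₁ p using 2
    linear_combination (norm := module) hst' + h₁ • (p - a₁) + h₂ • (p - a₂)
  · set R := s * r₁ + t * r₂ with hR_def
    set a := (s * r₁ / R) • a₁ + (t * r₂ / R) • a₂
    have hRa : R • a = (s * r₁) • a₁ + (t * r₂) • a₂ := by
      rw [smul_add, smul_smul, smul_smul, mul_div_cancel₀ _ hR.ne', mul_div_cancel₀ _ hR.ne']
    refine ⟨a, hx ha₁ ha₂ (by positivity) (by positivity) (by rw [← add_div, div_self hR.ne']),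
      ?_⟩
    convert mem_segment_add_smul_sub (p := p) (a := a) hR.le using 2
    linear_combination (norm := module) hst' + hRa - hR_def • p

theorem exists_mem_convexHull_range_forall_mem_convexHull_insert_zero {ι : Type*} [Fintype ι]
    [FiniteDimensional 𝕜 E] (hcard : Module.finrank 𝕜 E < Fintype.card ι) (b : ι → E) :
    ∃ c ∈ convexHull 𝕜 (range b), ∀ j, c ∈ convexHull 𝕜 (insert 0 (b '' {j}ᶜ)) := by
  let f : Option ι → E := fun o => o.elim 0 b
  have hf : ¬ AffineIndependent 𝕜 f := fun h => by
    have hle := h.card_le_finrank_succ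
    have hspan := Submodule.finrank_le (vectorSpan 𝕜 (range f))
    rw [Fintype.card_option] at hle
    omega
  have hsub : ∀ K : Set (Option ι), ∀ j, some j ∉ K → f '' K ⊆ insert 0 (b '' {j}ᶜ) := by
    rintro K j hj _ ⟨_ | i, hi, rfl⟩
    · exact mem_insert _ _
    · exact mem_insert_of_mem _ ⟨i, fun hij => hj (hij ▸ hi), rfl⟩
  obtain ⟨I, c, hcI, hcIc⟩ := Convex.radon_partition hf
  wlog hI : none ∉ I generalizing I
  · exact this Iᶜ hcIc (by rwa [compl_compl]) hI
  refine ⟨c, convexHull_mono ?_ hcI, fun j => ?_⟩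
  · rintro _ ⟨_ | i, hi, rfl⟩
    exacts [absurd hi hI, mem_range_self i]
  · by_cases hj : some j ∈ I
    · exact convexHull_mono (hsub Iᶜ j (not_not.2 hj)) hcIc
    · exact convexHull_mono (hsub I j hj) hcI

end

theorem conv_ge_zero_Dn_op_general (n : ℕ) (x : Set (Fin n → ℝ))
    (y : Fin (n + 1) → Set (Fin n → ℝ))
    (hx : Convex ℝ x) (hy : ∀ i, Convex ℝ (y i))
    (hx0 : (0 : Fin n → ℝ) ∈ x) (hy0 : ∀ i, (0 : Fin n → ℝ) ∈ y i) :
    convexHull ℝ (x ∪ ⋂ i, y i) =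
      ⋂ i, convexHull ℝ (x ∪ ⋂ j, ⋂ (_ : j ≠ i), y j) := by
  refine (subset_iInter fun i => convexHull_mono (union_subset_union_right x
    fun v hv => mem_iInter₂.2 fun j _ => mem_iInter.1 hv j)).antisymm fun p hp => ?_
  have hsplit (i : Fin (n + 1)) : ∃ a ∈ x, ∃ b ∈ ⋂ j, ⋂ (_ : j ≠ i), y j, p ∈ segment ℝ a b := by
    have hz : Convex ℝ (⋂ j, ⋂ (_ : j ≠ i), y j) := convex_iInter₂ fun j _ => hy j
    have hpi := mem_iInter.1 hp i
    rwa [convexHull_union ⟨0, hx0⟩ ⟨0, mem_iInter₂.2 fun j _ => hy0 j⟩, hx.convexHull_eq,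
      hz.convexHull_eq, mem_convexJoin] at hpi
  choose a ha b hb hab using hsplit
  obtain ⟨c, hc, hcy⟩ :=
    exists_mem_convexHull_range_forall_mem_convexHull_insert_zero (𝕜 := ℝ) (by simp) b
  obtain ⟨a', ha', hpc⟩ : ∃ a' ∈ x, p ∈ segment ℝ a' c :=
    (hx.convex_setOf_exists_mem_segment p).convexHull_subset_iff.2
      (range_subset_iff.2 fun i => ⟨a i, ha i, hab i⟩) hc
  have hc_mem : c ∈ ⋂ j, y j := mem_iInter.2 fun j =>
    convexHull_min (insert_subset (hy0 j) (image_subset_iff.2 fun i hi =>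
      mem_iInter₂.1 (hb i) j (Ne.symm hi))) (hy j) (hcy j)
  exact segment_subset_convexHull (mem_union_left _ ha') (mem_union_right _ hc_mem) hpc

/-- For every positive integer `n` and all convex subsets `x, y₁, …, y_{n+1}` of `ℝⁿ` each
containing the origin, `D_n^op(x, y₁, …, y_{n+1})` holds; thus `Conv(ℝⁿ)_{≥{0}}`
satisfies `D_n^op`. -/
theorem conv_ge_zero_Dn_op (n : ℕ) (hn : 0 < n) (x : Set (Fin n → ℝ))
    (y : Fin (n + 1) → Set (Fin n → ℝ))
    (hx : Convex ℝ x) (hy : ∀ i, Convex ℝ (y i))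
    (hx0 : (0 : Fin n → ℝ) ∈ x) (hy0 : ∀ i, (0 : Fin n → ℝ) ∈ y i) :
    convexHull ℝ (x ∪ ⋂ i, y i) =
      ⋂ i, convexHull ℝ (x ∪ ⋂ j, ⋂ (_ : j ≠ i), y j) :=
  conv_ge_zero_Dn_op_general n x y hx hy hx0 hy0
end

section
/- For each positive integer n, the lattice Conv(ℝⁿ) does not satisfy the identity D_n^op: there exist convex subsets x, y_1, …, y_{n+1} of ℝⁿ such that convexHull(x ∪ ⋂_{i=1}^{n+1} y_i) ≠ ⋂_{i=1}^{n+1} convexHull(x ∪ ⋂_{j≠i} y_j). -/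
/-- For each positive integer `n`, the lattice `Conv(ℝⁿ)` does not satisfy the
identity `D_n^op`. -/
theorem conv_not_Dn_op (n : ℕ) (hn : 0 < n) :
    ∃ (x : Set (Fin n → ℝ)) (y : Fin (n + 1) → Set (Fin n → ℝ)),
      Convex ℝ x ∧ (∀ i, Convex ℝ (y i)) ∧
        convexHull ℝ (x ∪ ⋂ i, y i) ≠
          ⋂ i, convexHull ℝ (x ∪ ⋂ j, ⋂ (_ : j ≠ i), y j) := by
  set z : Fin n := ⟨0, hn⟩ with hzdef
  set x : Set (Fin n → ℝ) := {p | p z = -1} with hxdef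
  set y : Fin (n + 1) → Set (Fin n → ℝ) :=
    fun i => if h : (i : ℕ) < n then {p | p ⟨i, h⟩ = 0} else {p | ∑ k, p k = 1} with hydef
  -- the "vertices" of the simplex
  set v : Fin (n + 1) → (Fin n → ℝ) :=
    fun i => if h : (i : ℕ) < n then Pi.single (⟨i, h⟩ : Fin n) (1 : ℝ) else 0 with hvdef
  have hxconv : Convex ℝ x := by
    intro p hp q hq a b ha hb hab
    simp only [hxdef, Set.mem_setOf_eq] at *
    simp only [Pi.add_apply, Pi.smul_apply, smul_eq_mul, hp, hq]
    nlinarith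
  have hyconv : ∀ i, Convex ℝ (y i) := by
    intro i
    simp only [hydef]
    split
    · intro p hp q hq a b ha hb hab
      simp only [Set.mem_setOf_eq] at *
      simp only [Pi.add_apply, Pi.smul_apply, smul_eq_mul, hp, hq]
      ring
    · intro p hp q hq a b ha hb hab
      simp only [Set.mem_setOf_eq] at *
      simp only [Pi.add_apply, Pi.smul_apply, smul_eq_mul,
        Finset.sum_add_distrib, ← Finset.mul_sum, hp, hq]
      linarith
  refine ⟨x, y, hxconv, hyconv, ?_⟩
  -- the intersection of all y i is empty
  have hiInter : (⋂ i, y i) = ∅ := by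
    ext p
    simp only [Set.mem_iInter, Set.mem_empty_iff_false, iff_false]
    intro hp
    have h1 : ∀ k : Fin n, p k = 0 := by
      intro k
      have hk := hp ⟨(k : ℕ), Nat.lt_succ_of_lt k.2⟩
      simp only [hydef] at hk
      rw [dif_pos k.2] at hk
      simpa using hk
    have h2 := hp ⟨n, Nat.lt_succ_self n⟩
    simp only [hydef] at h2
    rw [dif_neg (lt_irrefl n)] at h2
    simp only [Set.mem_setOf_eq] at h2
    simp [h1] at h2
  -- v i belongs to y j for every j ≠ i
  have hv : ∀ i j : Fin (n + 1), j ≠ i → v i ∈ y j := by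
    intro i j hji
    have hvij : (j : ℕ) ≠ (i : ℕ) := fun h => hji (Fin.ext h)
    simp only [hydef, hvdef]
    by_cases hj : (j : ℕ) < n
    · rw [dif_pos hj]
      by_cases hi : (i : ℕ) < n
      · rw [dif_pos hi]
        have : (⟨(j : ℕ), hj⟩ : Fin n) ≠ ⟨(i : ℕ), hi⟩ := by
          intro h
          exact hvij (by simpa using h)
        simp only [Set.mem_setOf_eq]
        exact Pi.single_eq_of_ne this 1
      · rw [dif_neg hi]; simp
    · rw [dif_neg hj]
      have hjn : (j : ℕ) = n := le_antisymm (Nat.lt_succ_iff.mp j.2) (not_lt.mp hj)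
      have hi : (i : ℕ) < n := by
        have h2 := i.2
        omega
      rw [dif_pos hi]
      simp only [Set.mem_setOf_eq]
      rw [Finset.sum_pi_single']
      simp
  -- the distinguished point q
  set q : Fin n → ℝ := Pi.single z (-1/2 : ℝ) with hqdef
  intro heq
  -- q belongs to the right-hand side
  have hqmem : ∀ i : Fin (n + 1),
      q ∈ convexHull ℝ (x ∪ ⋂ j, ⋂ (_ : j ≠ i), y j) := by
    intro i
    have hvmem : v i ∈ convexHull ℝ (x ∪ ⋂ j, ⋂ (_ : j ≠ i), y j) := by
      apply subset_convexHull
      right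
      simp only [Set.mem_iInter]
      intro j hj
      exact hv i j hj
    by_cases hiz : (i : ℕ) = 0
    · -- v i = Pi.single z 1
      have hvi : v i = Pi.single z 1 := by
        have hi : (i : ℕ) < n := by omega
        have hzz : (⟨(i : ℕ), hi⟩ : Fin n) = z := by
          apply Fin.ext
          exact hiz
        simp only [hvdef]
        rw [dif_pos hi, hzz]
      have hhmem : (Pi.single z (-1 : ℝ)) ∈
          convexHull ℝ (x ∪ ⋂ j, ⋂ (_ : j ≠ i), y j) := by
        apply subset_convexHull
        left
        simp [hxdef]
      have hcomb : q = (3/4 : ℝ) • (Pi.single z (-1 : ℝ) : Fin n → ℝ) + (1/4 : ℝ) • v i := by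
        rw [hvi]
        funext k
        simp only [hqdef, Pi.add_apply, Pi.smul_apply, smul_eq_mul, Pi.single_apply]
        split <;> ring
      rw [hcomb]
      exact (convex_convexHull ℝ _) hhmem hvmem (by norm_num) (by norm_num) (by norm_num)
    · -- (v i) z = 0
      have hviz : v i z = 0 := by
        simp only [hvdef]
        split
        · apply Pi.single_eq_of_ne
          intro h
          exact hiz (congrArg Fin.val h).symm
        · rfl
      have hhmem : (Pi.single z (-1 : ℝ) - v i) ∈
          convexHull ℝ (x ∪ ⋂ j, ⋂ (_ : j ≠ i), y j) := by
        apply subset_convexHull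
        left
        simp [hxdef, hviz]
      have hcomb : q = (1/2 : ℝ) • ((Pi.single z (-1 : ℝ) : Fin n → ℝ) - v i) + (1/2 : ℝ) • v i := by
        funext k
        simp only [hqdef, Pi.add_apply, Pi.smul_apply, Pi.sub_apply, smul_eq_mul,
          Pi.single_apply]
        split <;> ring
      rw [hcomb]
      exact (convex_convexHull ℝ _) hhmem hvmem (by norm_num) (by norm_num) (by norm_num)
  have hqRHS : q ∈ ⋂ i, convexHull ℝ (x ∪ ⋂ j, ⋂ (_ : j ≠ i), y j) :=
    Set.mem_iInter.mpr hqmem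
  rw [← heq, hiInter, Set.union_empty, hxconv.convexHull_eq] at hqRHS
  have : q z = -1 := hqRHS
  simp [hqdef] at this
  norm_num at this
end

section
/- For every natural number n and all convex subsets x, y_1, …, y_{n+2} of ℝⁿ, one has ⋂_{i=1}^{n+2} convexHull(x ∪ y_i) ⊆ convexHull(x ∪ ⋃_{(I₁,I₂)} (convexHull(⋃_{i∈I₁} y_i) ∩ convexHull(⋃_{i∈I₂} y_i))), where the union ⋃_{(I₁,I₂)} is taken over all ordered pairs (I₁, I₂) of nonempty disjoint subsets of the index set {1, …, n+2} whose union is the whole index set. -/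
/-!
Let `p` lie in every `convexHull (x ∪ yᵢ)` but not in `x` (otherwise, or if `x = ∅`, the claim
is immediate). Then `p` lies on a segment `[aᵢ, bᵢ]` with `aᵢ ∈ x`, `bᵢ ∈ yᵢ` and positive weight
on `bᵢ`, i.e. `bᵢ` lies in the cone `p + ℝ≥0 • (p - x)`, which is convex because `x` is. The
`n + 2` points `bᵢ` of `ℝⁿ` have a Radon partition `(I, Iᶜ)`, whose Radon point `q` lies in the
join of the `yᵢ` over `I` meet the join over `Iᶜ`, and also in the cone; so `p` lies on a segment
from `q` to a point of `x`.
-/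

open Set

section ReflectedCone

variable {𝕜 E : Type*} [Field 𝕜] [LinearOrder 𝕜] [IsStrictOrderedRing 𝕜]
  [AddCommGroup E] [Module 𝕜 E] {p z : E} {s t : Set E}

variable (𝕜) in
def reflectedCone (p : E) (s : Set E) : Set E :=
  {z | ∃ a ∈ s, ∃ c : 𝕜, 0 ≤ c ∧ z = p + c • (p - a)}

protected theorem Convex.reflectedCone (hs : Convex 𝕜 s) (p : E) :
    Convex 𝕜 (reflectedCone 𝕜 p s) := by
  rintro _ ⟨a₁, ha₁, c₁, hc₁, rfl⟩ _ ⟨a₂, ha₂, c₂, hc₂, rfl⟩ θ₁ θ₂ hθ₁ hθ₂ hθ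
  obtain ⟨a, ha, hav⟩ :=
    hs.exists_mem_add_smul_eq ha₁ ha₂ (mul_nonneg hθ₁ hc₁) (mul_nonneg hθ₂ hc₂)
  refine ⟨a, ha, θ₁ * c₁ + θ₂ * c₂, by positivity, ?_⟩
  rw [smul_sub _ p a, hav]
  linear_combination (norm := module) hθ • p

theorem mem_convexJoin_of_mem_reflectedCone (hz : z ∈ reflectedCone 𝕜 p s) :
    p ∈ convexJoin 𝕜 {z} s := by
  obtain ⟨a, ha, c, hc, rfl⟩ := hz
  have hc₁ : (1 + c) ≠ 0 := by positivity
  refine mem_convexJoin.2 ⟨_, rfl, a, ha, (1 + c)⁻¹, c / (1 + c), by positivity, by positivity,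
    by field_simp, ?_⟩
  match_scalars <;> field_simp; ring

theorem exists_mem_reflectedCone_of_mem_convexHull_union (hs : Convex 𝕜 s) (ht : Convex 𝕜 t)
    (hs₀ : s.Nonempty) (hp : p ∈ convexHull 𝕜 (s ∪ t)) (hps : p ∉ s) :
    ∃ b ∈ t, b ∈ reflectedCone 𝕜 p s := by
  rcases t.eq_empty_or_nonempty with rfl | ht₀
  · rw [union_empty, hs.convexHull_eq] at hp
    exact absurd hp hps
  rw [hs.convexHull_union ht hs₀ ht₀] at hp
  obtain ⟨a, ha, b, hb, u, v, hu, hv, huv, rfl⟩ := mem_convexJoin.1 hp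
  have hv₀ : v ≠ 0 := by
    rintro rfl
    rw [add_zero] at huv
    exact hps (by simpa [huv] using ha)
  refine ⟨b, hb, a, ha, u / v, by positivity, ?_⟩
  obtain rfl : u = 1 - v := eq_sub_of_add_eq huv
  match_scalars <;> field_simp <;> ring

end ReflectedCone

section BipartitionHullInter

variable {ι 𝕜 E : Type*} [Semiring 𝕜] [PartialOrder 𝕜] [AddCommMonoid E] [Module 𝕜 E]
  {y : ι → Set E} {q : E}

variable (𝕜) in
def bipartitionHullInter (y : ι → Set E) : Set E :=
  ⋃ (I : Set ι × Set ι) (_ : I.1.Nonempty ∧ I.2.Nonempty ∧ Disjoint I.1 I.2 ∧ I.1 ∪ I.2 = univ),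
    (convexHull 𝕜 (⋃ i ∈ I.1, y i) ∩ convexHull 𝕜 (⋃ i ∈ I.2, y i))

theorem mem_bipartitionHullInter {I : Set ι} (hI : I.Nonempty) (hIc : Iᶜ.Nonempty)
    (h : q ∈ convexHull 𝕜 (⋃ i ∈ I, y i)) (hc : q ∈ convexHull 𝕜 (⋃ i ∈ Iᶜ, y i)) :
    q ∈ bipartitionHullInter 𝕜 y :=
  mem_iUnion₂.2 ⟨(I, Iᶜ), ⟨hI, hIc, disjoint_compl_right, union_compl_self I⟩, h, hc⟩

end BipartitionHullInter

theorem exists_mem_bipartitionHullInter_mem_convexHull {ι 𝕜 E : Type*} [Field 𝕜] [LinearOrder 𝕜]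
    [IsStrictOrderedRing 𝕜] [AddCommGroup E] [Module 𝕜 E] {y : ι → Set E} {b : ι → E}
    (hb : ∀ i, b i ∈ y i) (h : ¬AffineIndependent 𝕜 b) :
    ∃ q ∈ bipartitionHullInter 𝕜 y, q ∈ convexHull 𝕜 (range b) := by
  obtain ⟨I, q, hq, hqc⟩ := Convex.radon_partition h
  have image_subset_biUnion (J : Set ι) : b '' J ⊆ ⋃ i ∈ J, y i := by
    rintro _ ⟨i, hi, rfl⟩
    exact mem_biUnion hi (hb i)
  refine ⟨q, mem_bipartitionHullInter ?_ ?_ (convexHull_mono (image_subset_biUnion I) hq)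
    (convexHull_mono (image_subset_biUnion Iᶜ) hqc), convexHull_mono (image_subset_range b I) hq⟩
  · exact image_nonempty.1 (convexHull_nonempty_iff.1 ⟨q, hq⟩)
  · exact image_nonempty.1 (convexHull_nonempty_iff.1 ⟨q, hqc⟩)

theorem not_affineIndependent_of_finrank_add_one_lt {ι 𝕜 E : Type*} [Fintype ι] [DivisionRing 𝕜]
    [AddCommGroup E] [Module 𝕜 E] [FiniteDimensional 𝕜 E] (f : ι → E)
    (h : Module.finrank 𝕜 E + 1 < Fintype.card ι) : ¬AffineIndependent 𝕜 f := fun hf =>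
  h.not_ge <| hf.card_le_finrank_succ.trans <|
    Nat.succ_le_succ (Submodule.finrank_le (vectorSpan 𝕜 (range f)))

/-- Radon-type identity (x.47) in `Conv(ℝⁿ)`: for all convex subsets `x, y₁, …, y_{n+2}`
of `ℝⁿ`, `⋂ᵢ (x ∨ yᵢ) ≤ x ∨ ⋁_{(I₁,I₂)} ((⋁_{i∈I₁} yᵢ) ∧ (⋁_{i∈I₂} yᵢ))`, where `(I₁, I₂)`
ranges over partitions of the index set into two nonempty parts. -/
theorem conv_radon_identity (n : ℕ) (x : Set (Fin n → ℝ))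
    (y : Fin (n + 2) → Set (Fin n → ℝ))
    (hx : Convex ℝ x) (hy : ∀ i, Convex ℝ (y i)) :
    (⋂ i, convexHull ℝ (x ∪ y i)) ⊆
      convexHull ℝ (x ∪
        ⋃ (I : Set (Fin (n + 2)) × Set (Fin (n + 2)))
          (_ : I.1.Nonempty ∧ I.2.Nonempty ∧ Disjoint I.1 I.2 ∧ I.1 ∪ I.2 = Set.univ),
          (convexHull ℝ (⋃ i ∈ I.1, y i) ∩ convexHull ℝ (⋃ i ∈ I.2, y i))) := by
  change _ ⊆ convexHull ℝ (x ∪ bipartitionHullInter ℝ y)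
  intro p hp
  rw [mem_iInter] at hp
  rcases x.eq_empty_or_nonempty with rfl | hx₀
  · have hpy (i) : p ∈ y i := by simpa [(hy i).convexHull_eq] using hp i
    refine subset_convexHull ℝ _ (Or.inr (mem_bipartitionHullInter (I := {0})
      (singleton_nonempty 0) ⟨1, by simp⟩ ?_ ?_))
    · exact subset_convexHull ℝ _ (mem_biUnion rfl (hpy 0))
    · exact subset_convexHull ℝ _ (mem_biUnion (by simp) (hpy 1))
  by_cases hpx : p ∈ x
  · exact subset_convexHull ℝ _ (Or.inl hpx)
  choose b hby hb using fun i =>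
    exists_mem_reflectedCone_of_mem_convexHull_union hx (hy i) hx₀ (hp i) hpx
  obtain ⟨q, hqZ, hqb⟩ := exists_mem_bipartitionHullInter_mem_convexHull hby
    (not_affineIndependent_of_finrank_add_one_lt (𝕜 := ℝ) b (by simp))
  have hq : q ∈ reflectedCone ℝ p x :=
    convexHull_min (range_subset_iff.2 hb) (hx.reflectedCone p) hqb
  have hqx : {q} ∪ x ⊆ x ∪ bipartitionHullInter ℝ y :=
    union_subset (singleton_subset_iff.2 (Or.inr hqZ)) subset_union_left
  exact convexHull_mono hqx <|
    convexJoin_subset_convexHull _ _ (mem_convexJoin_of_mem_reflectedCone hq)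
end

section
/- For every natural number n and all convex subsets x, y_1, …, y_{n+2} of ℝ^{n+1} each containing the origin 0, one has ⋂_{i=1}^{n+2} convexHull(x ∪ y_i) ⊆ convexHull(x ∪ ⋃_{(I₁,I₂)} (convexHull(⋃_{i∈I₁} y_i) ∩ convexHull(⋃_{i∈I₂} y_i))), where the union ⋃_{(I₁,I₂)} is taken over all ordered pairs (I₁, I₂) of nonempty disjoint subsets of the index set {1, …, n+2} whose union is the whole index set. -/
/-!
Write `p = lineMap (u i) (v i) (t i)` with `u i ∈ x`, `v i ∈ y i`, `t i ∈ [0, 1]`; if some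
`t i = 0` then `p ∈ x`. Otherwise the `n + 2` vectors `v i` of `ℝ^{n+1}` satisfy a relation
`∑ c i • v i = 0` with `∑ c i ≥ 0`. For `P = {i | 0 < c i}` the point `z = P.centerMass c v`
lies in the hull of `⋃ i ∈ P, y i`, and, being `∑ i ∉ P, (-c i / ∑ j ∈ P, c j) • v i` with total
weight at most one, in the hull of `⋃ i ∉ P, y i` too, as that hull contains `0` (when `P` is
everything, `z = 0 ∈ x` instead). Averaging the identities for `p` over `P` with weights
`c i / t i` turns `∑ c i • v i` into `(∑ c i) • z`, so `p` is a convex combination of the points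
`lineMap (u i) z (t i)` of `convexHull (x ∪ {z})`.
-/

open Finset Set AffineMap

section

variable {ι 𝕜 E : Type*} [Field 𝕜] [LinearOrder 𝕜] [IsStrictOrderedRing 𝕜]
  [AddCommGroup E] [Module 𝕜 E]

theorem Convex.sum_mem_of_sum_le_one {s : Set E} (hs : Convex 𝕜 s) (h0 : (0 : E) ∈ s)
    {t : Finset ι} {w : ι → 𝕜} {z : ι → E} (hw₀ : ∀ i ∈ t, 0 ≤ w i)
    (hw₁ : ∑ i ∈ t, w i ≤ 1) (hz : ∀ i ∈ t, z i ∈ s) : ∑ i ∈ t, w i • z i ∈ s := by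
  rcases (sum_nonneg hw₀).eq_or_lt with hW | hW
  · rw [sum_eq_zero fun i hi => by rw [(sum_eq_zero_iff_of_nonneg hw₀).1 hW.symm i hi, zero_smul]]
    exact h0
  · have := hs.smul_mem_of_zero_mem h0 (hs.centerMass_mem hw₀ hW hz) ⟨hW.le, hw₁⟩
    rwa [Finset.centerMass, smul_inv_smul₀ hW.ne'] at this

theorem Convex.mem_of_lineMap_eq_of_centerMass_mem {K : Set E} (hK : Convex 𝕜 K)
    {s : Finset ι} (hs : s.Nonempty) {c t : ι → 𝕜} {u v : ι → E} {p : E}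
    (hc : ∀ i ∈ s, 0 < c i) (ht : ∀ i ∈ s, t i ∈ Set.Ioc 0 1) (hu : ∀ i ∈ s, u i ∈ K)
    (hp : ∀ i ∈ s, lineMap (u i) (v i) (t i) = p) (hv : s.centerMass c v ∈ K) : p ∈ K := by
  set z := s.centerMass c v
  have hcz : ∑ i ∈ s, c i • (z - v i) = 0 := by
    simp only [smul_sub, sum_sub_distrib, ← sum_smul, z, Finset.centerMass,
      smul_inv_smul₀ (sum_pos hc hs).ne', sub_self]
  have key : ∀ i ∈ s,
      (c i / t i) • lineMap (u i) z (t i) = (c i / t i) • p + c i • (z - v i) := by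
    intro i hi
    calc (c i / t i) • lineMap (u i) z (t i)
        = (c i / t i) • lineMap (u i) (v i) (t i) + (c i / t i * t i) • (z - v i) := by
          simp only [lineMap_apply_module']
          module
      _ = (c i / t i) • p + c i • (z - v i) := by
          rw [hp i hi, div_mul_cancel₀ _ (ht i hi).1.ne']
  have hμ : ∀ i ∈ s, 0 < c i / t i := fun i hi => div_pos (hc i hi) (ht i hi).1
  have hpz : s.centerMass (fun i => c i / t i) (fun i => lineMap (u i) z (t i)) = p := by
    rw [Finset.centerMass, sum_congr rfl key, sum_add_distrib, ← sum_smul, hcz, add_zero,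
      inv_smul_smul₀ (sum_pos hμ hs).ne']
  rw [← hpz]
  exact hK.centerMass_mem (fun i hi => (hμ i hi).le) (sum_pos hμ hs)
    fun i hi => hK.lineMap_mem (hu i hi) hv ⟨(ht i hi).1.le, (ht i hi).2⟩

theorem Convex.exists_lineMap_eq_of_mem_convexHull_union {s t : Set E} (hs : Convex 𝕜 s)
    (ht : Convex 𝕜 t) (hs₀ : s.Nonempty) (ht₀ : t.Nonempty) {p : E}
    (hp : p ∈ convexHull 𝕜 (s ∪ t)) :
    ∃ u ∈ s, ∃ v ∈ t, ∃ τ ∈ Set.Icc (0 : 𝕜) 1, lineMap u v τ = p := by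
  rw [convexHull_union hs₀ ht₀, hs.convexHull_eq, ht.convexHull_eq, mem_convexJoin] at hp
  obtain ⟨u, hu, v, hv, hpuv⟩ := hp
  rw [segment_eq_image_lineMap] at hpuv
  obtain ⟨τ, hτ, rfl⟩ := hpuv
  exact ⟨u, hu, v, hv, τ, hτ, rfl⟩

theorem Fintype.exists_relation_sum_nonneg_of_not_linearIndependent [Fintype ι] {v : ι → E}
    (h : ¬LinearIndependent 𝕜 v) :
    ∃ c : ι → 𝕜, ∑ i, c i • v i = 0 ∧ 0 ≤ ∑ i, c i ∧ ∃ i, 0 < c i := by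
  have pos_of_sum_nonneg : ∀ c : ι → 𝕜, 0 ≤ ∑ i, c i → (∃ i, c i ≠ 0) → ∃ i, 0 < c i := by
    intro c hc ⟨i, hi⟩
    by_contra! hneg
    exact hi ((Finset.sum_eq_zero_iff_of_nonpos fun j _ => hneg j).1
      (le_antisymm (Finset.sum_nonpos fun j _ => hneg j) hc) i (mem_univ i))
  obtain ⟨g, hg, i, hi⟩ := Fintype.not_linearIndependent_iff.1 h
  rcases le_total 0 (∑ i, g i) with hs | hs
  · exact ⟨g, hg, hs, pos_of_sum_nonneg g hs ⟨i, hi⟩⟩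
  · have hs' : 0 ≤ ∑ i, (-g) i := by simpa using hs
    exact ⟨-g, by simp [neg_smul, hg], hs', pos_of_sum_nonneg _ hs' ⟨i, by simpa using hi⟩⟩

theorem centerMass_pos_mem_convexHull_inter [Fintype ι] {y : ι → Set E} {v : ι → E}
    {c : ι → 𝕜} (hv : ∀ i, v i ∈ y i) (hcv : ∑ i, c i • v i = 0) (hc : 0 ≤ ∑ i, c i)
    (hpos : ∃ i, 0 < c i) {j : ι} (hj : c j ≤ 0) (h0 : (0 : E) ∈ y j) :
    ({i | 0 < c i} : Finset ι).centerMass c v ∈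
      convexHull 𝕜 (⋃ i ∈ {i | 0 < c i}, y i) ∩ convexHull 𝕜 (⋃ i ∈ {i | 0 < c i}ᶜ, y i) := by
  classical
  set P : Finset ι := {i | 0 < c i}
  obtain ⟨i₀, hi₀⟩ := hpos
  have hA : 0 < ∑ i ∈ P, c i :=
    sum_pos' (fun i hi => (mem_filter.1 hi).2.le) ⟨i₀, by simp [P, hi₀], hi₀⟩
  refine ⟨P.centerMass_mem_convexHull (fun i hi => (mem_filter.1 hi).2.le) hA
    fun i hi => mem_biUnion (by simpa [P] using hi) (hv i), ?_⟩
  have hsplit : ∑ i ∈ P, c i • v i = ∑ i ∈ Pᶜ, -c i • v i := by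
    simp only [neg_smul, sum_neg_distrib]
    rw [eq_neg_iff_add_eq_zero, sum_add_sum_compl, hcv]
  rw [Finset.centerMass, hsplit, smul_sum]
  simp only [smul_smul]
  refine (convex_convexHull 𝕜 _).sum_mem_of_sum_le_one
    (subset_convexHull 𝕜 _ (mem_biUnion (by simpa using hj) h0)) ?_ ?_ ?_
  · intro i hi
    exact mul_nonneg (inv_nonneg.2 hA.le) (neg_nonneg.2 (by simpa [P] using hi))
  · rw [← mul_sum, inv_mul_le_one₀ hA, sum_neg_distrib, neg_le_iff_add_nonneg,
      sum_add_sum_compl]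
    exact hc
  · intro i hi
    exact subset_convexHull 𝕜 _ (mem_biUnion (by simpa [P] using hi) (hv i))

end

/-- Radon-type identity (x.47) in `Conv(ℝ^{n+1})_{≥{0}}`: for all convex subsets
`x, y₁, …, y_{n+2}` of `ℝ^{n+1}` each containing the origin, the inclusion holds. -/
theorem conv_ge_zero_radon_identity (n : ℕ) (x : Set (Fin (n + 1) → ℝ))
    (y : Fin (n + 2) → Set (Fin (n + 1) → ℝ))
    (hx : Convex ℝ x) (hy : ∀ i, Convex ℝ (y i))
    (hx0 : (0 : Fin (n + 1) → ℝ) ∈ x) (hy0 : ∀ i, (0 : Fin (n + 1) → ℝ) ∈ y i) :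
    (⋂ i, convexHull ℝ (x ∪ y i)) ⊆
      convexHull ℝ (x ∪
        ⋃ (I : Set (Fin (n + 2)) × Set (Fin (n + 2)))
          (_ : I.1.Nonempty ∧ I.2.Nonempty ∧ Disjoint I.1 I.2 ∧ I.1 ∪ I.2 = Set.univ),
          (convexHull ℝ (⋃ i ∈ I.1, y i) ∩ convexHull ℝ (⋃ i ∈ I.2, y i))) := by
  set Z := ⋃ (I : Set (Fin (n + 2)) × Set (Fin (n + 2)))
    (_ : I.1.Nonempty ∧ I.2.Nonempty ∧ Disjoint I.1 I.2 ∧ I.1 ∪ I.2 = Set.univ),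
    (convexHull ℝ (⋃ i ∈ I.1, y i) ∩ convexHull ℝ (⋃ i ∈ I.2, y i))
  have hxK : x ⊆ convexHull ℝ (x ∪ Z) := subset_union_left.trans (subset_convexHull ℝ _)
  intro p hp
  have hseg : ∀ i, ∃ u ∈ x, ∃ v ∈ y i, ∃ t ∈ Set.Icc (0 : ℝ) 1, lineMap u v t = p := fun i =>
    hx.exists_lineMap_eq_of_mem_convexHull_union (hy i) ⟨0, hx0⟩ ⟨0, hy0 i⟩ (mem_iInter.1 hp i)
  choose u hu v hv t ht hpt using hseg
  by_cases h0 : ∃ i, t i = 0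
  · obtain ⟨i, hi⟩ := h0
    rw [← hpt i, hi, lineMap_apply_zero]
    exact hxK (hu i)
  push Not at h0
  have hdep : ¬LinearIndependent ℝ v := fun h => by
    simpa using h.fintype_card_le_finrank
  obtain ⟨c, hcv, hc, hpos⟩ := Fintype.exists_relation_sum_nonneg_of_not_linearIndependent hdep
  refine (convex_convexHull ℝ _).mem_of_lineMap_eq_of_centerMass_mem (s := {i | 0 < c i})
    (by simpa [Finset.Nonempty] using hpos) (fun i hi => by simpa using hi)
    (fun i _ => ⟨(ht i).1.lt_of_ne' (h0 i), (ht i).2⟩) (fun i _ => hxK (hu i))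
    (fun i _ => hpt i) ?_
  by_cases hneg : ∃ j, c j ≤ 0
  · obtain ⟨j, hj⟩ := hneg
    refine subset_convexHull ℝ _ (Or.inr (mem_iUnion₂.2 ⟨({i | 0 < c i}, {i | 0 < c i}ᶜ),
      ⟨hpos, ⟨j, hj.not_gt⟩, disjoint_compl_right, union_compl_self _⟩,
      centerMass_pos_mem_convexHull_inter hv hcv hc hpos hj (hy0 j)⟩))
  · push Not at hneg
    have hall : ({i | 0 < c i} : Finset (Fin (n + 2))) = Finset.univ :=
      filter_true_of_mem fun i _ => hneg i
    rw [hall, Finset.centerMass, hcv, smul_zero]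
    exact hxK hx0
end

section
/- For every natural number n, there exist convex subsets x, y_1, …, y_{n+2} of ℝ^{n+1} such that ⋂_{i=1}^{n+2} convexHull(x ∪ y_i) is NOT contained in convexHull(x ∪ ⋃_{(I₁,I₂)} (convexHull(⋃_{i∈I₁} y_i) ∩ convexHull(⋃_{i∈I₂} y_i))), where the union ⋃_{(I₁,I₂)} is taken over all ordered pairs (I₁, I₂) of nonempty disjoint subsets of the index set {1, …, n+2} whose union is the whole index set. -/
/-!
Take for `y₁, …, y_{n+2}` the singletons of the vertices of a simplex in `ℝ^{n+1}`. Since the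
vertices are affinely independent, complementary groups of them span disjoint affine subspaces, so
every Radon intersection is empty and the right-hand side collapses to the convex set `x`. Choose
a point `p` outside the simplex and let `x` be the reflection of the simplex through `p`. Then `p`
is not in `x`, yet `p` is the midpoint of the vertex `yᵢ` and its reflection, which lies in `x`,
so `p` lies in every `convexHull (x ∪ yᵢ)`.
-/

open Set

theorem LinearIndependent.affineIndependent_cons_zero
    {𝕜 E : Type*} [Ring 𝕜] [AddCommGroup E] [Module 𝕜 E] {n : ℕ} {v : Fin n → E}
    (hv : LinearIndependent 𝕜 v) : AffineIndependent 𝕜 (Fin.cons 0 v : Fin (n + 1) → E) := by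
  rw [affineIndependent_iff_linearIndependent_vsub 𝕜 _ 0]
  convert hv.comp (fun i : {i : Fin (n + 1) // i ≠ 0} ↦ i.1.pred i.2)
    fun i j h ↦ Subtype.ext (by simpa using h) with ⟨i, hi⟩
  obtain ⟨j, rfl⟩ := Fin.exists_succ_eq.2 hi
  simp

section OrderedRing

variable {𝕜 E ι : Type*} [Ring 𝕜] [PartialOrder 𝕜] [AddCommGroup E] [Module 𝕜 E]

variable (𝕜) in
def radonUnion (Y : ι → Set E) : Set E :=
  ⋃ (I : Set ι × Set ι) (_ : I.1.Nonempty ∧ I.2.Nonempty ∧ Disjoint I.1 I.2 ∧ I.1 ∪ I.2 = univ),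
    convexHull 𝕜 (⋃ i ∈ I.1, Y i) ∩ convexHull 𝕜 (⋃ i ∈ I.2, Y i)

theorem AffineIndependent.disjoint_convexHull_image [Nontrivial 𝕜] {y : ι → E}
    (hy : AffineIndependent 𝕜 y) {s t : Set ι} (hst : Disjoint s t) :
    Disjoint (convexHull 𝕜 (y '' s)) (convexHull 𝕜 (y '' t)) :=
  (hy.affineSpan_disjoint_of_disjoint hst).mono (convexHull_subset_affineSpan _)
    (convexHull_subset_affineSpan _)

theorem AffineIndependent.radonUnion_singleton_eq_empty [Nontrivial 𝕜] {y : ι → E}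
    (hy : AffineIndependent 𝕜 y) : radonUnion 𝕜 (fun i ↦ {y i}) = ∅ := by
  simp only [radonUnion, iUnion_eq_empty]
  rintro ⟨s, t⟩ ⟨-, -, hst, -⟩
  simpa only [← image_eq_iUnion, ← disjoint_iff_inter_eq_empty] using
    hy.disjoint_convexHull_image hst

theorem notMem_convexHull_pointReflection_image {p : E} {s : Set E} (hp : p ∉ convexHull 𝕜 s) :
    p ∉ convexHull 𝕜 (Equiv.pointReflection p '' s) := by
  change p ∉ convexHull 𝕜 ((AffineEquiv.pointReflection 𝕜 p).toAffineMap '' s)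
  rw [← AffineMap.image_convexHull]
  rintro ⟨z, hz, hzp⟩
  obtain rfl : z = p :=
    (Equiv.pointReflection p).injective (hzp.trans (Equiv.pointReflection_self p).symm)
  exact hp hz

end OrderedRing

section OrderedField

variable {𝕜 E ι : Type*} [Field 𝕜] [LinearOrder 𝕜] [IsStrictOrderedRing 𝕜]
  [AddCommGroup E] [Module 𝕜 E]

theorem mem_convexHull_union_singleton_of_pointReflection_mem {x : Set E} {p q : E}
    (h : Equiv.pointReflection p q ∈ x) : p ∈ convexHull 𝕜 (x ∪ {q}) := by
  rw [← midpoint_pointReflection_left (R := 𝕜) p q]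
  exact segment_subset_convexHull (mem_union_left _ h) (mem_union_right _ (mem_singleton q))
    (midpoint_mem_segment (𝕜 := 𝕜) _ _)

theorem AffineIndependent.not_iInter_convexHull_subset_radonUnion {y : ι → E}
    (hy : AffineIndependent 𝕜 y) {x : Set E} (hx : Convex 𝕜 x) {p : E}
    (hyx : ∀ i, Equiv.pointReflection p (y i) ∈ x) (hpx : p ∉ x) :
    ¬ (⋂ i, convexHull 𝕜 (x ∪ {y i})) ⊆ convexHull 𝕜 (x ∪ radonUnion 𝕜 fun i ↦ {y i}) := by
  rw [hy.radonUnion_singleton_eq_empty, union_empty, hx.convexHull_eq]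
  exact fun h ↦ hpx <| h <| mem_iInter.2 fun i ↦
    mem_convexHull_union_singleton_of_pointReflection_mem (hyx i)

end OrderedField

/-- The Radon-type identity (x.47) for parameter `n` fails in `Conv(ℝ^{n+1})`. -/
theorem conv_succ_not_radon_identity (n : ℕ) :
    ∃ (x : Set (Fin (n + 1) → ℝ)) (y : Fin (n + 2) → Set (Fin (n + 1) → ℝ)),
      Convex ℝ x ∧ (∀ i, Convex ℝ (y i)) ∧
      ¬ ((⋂ i, convexHull ℝ (x ∪ y i)) ⊆
          convexHull ℝ (x ∪
            ⋃ (I : Set (Fin (n + 2)) × Set (Fin (n + 2)))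
              (_ : I.1.Nonempty ∧ I.2.Nonempty ∧ Disjoint I.1 I.2 ∧ I.1 ∪ I.2 = Set.univ),
              (convexHull ℝ (⋃ i ∈ I.1, y i) ∩ convexHull ℝ (⋃ i ∈ I.2, y i)))) := by
  set v : Fin (n + 2) → Fin (n + 1) → ℝ := Fin.cons 0 (Pi.basisFun ℝ (Fin (n + 1)))
  have hv : AffineIndependent ℝ v := (Pi.basisFun ℝ _).linearIndependent.affineIndependent_cons_zero
  obtain ⟨p, hp⟩ : ∃ p, p ∉ convexHull ℝ (range v) :=
    (ne_univ_iff_exists_notMem _).1 ((finite_range v).isCompact_convexHull ℝ).ne_univ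
  set x := convexHull ℝ (Equiv.pointReflection p '' range v)
  refine ⟨x, fun i ↦ {v i}, convex_convexHull ℝ _, fun _ ↦ convex_singleton _, ?_⟩
  exact hv.not_iInter_convexHull_subset_radonUnion (convex_convexHull ℝ _)
    (fun i ↦ subset_convexHull ℝ _ (mem_image_of_mem _ (mem_range_self i)))
    (notMem_convexHull_pointReflection_image hp)
end

section
/- For every positive integer n, the lattice of compact convex subsets of ℝⁿ is join semidistributive: if x, y_1, y_2 are compact convex subsets of ℝⁿ with convexHull(x ∪ y_1) = convexHull(x ∪ y_2), then convexHull(x ∪ y_1) = convexHull(x ∪ (y_1 ∩ y_2)). -/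
/-!
Extreme points of `convexHull ℝ (x ∪ y₁) = convexHull ℝ (x ∪ y₂)` lie in `x ∪ y₁` and in
`x ∪ y₂`, hence in `x ∪ (y₁ ∩ y₂)`. By Krein–Milman the compact convex set
`convexHull ℝ (x ∪ y₁)` is the closed convex hull of its extreme points, so it lies in the
convex hull of `x ∪ (y₁ ∩ y₂)`, which is compact, hence closed.
-/

open Set

variable {E : Type*} [AddCommGroup E] [Module ℝ E]

theorem convexJoin_eq_image (s t : Set E) :
    convexJoin ℝ s t =
      (fun p : ℝ × E × E => (1 - p.1) • p.2.1 + p.1 • p.2.2) '' (Icc 0 1 ×ˢ s ×ˢ t) := by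
  ext z
  simp only [mem_convexJoin, segment_eq_image, mem_image, mem_prod, Prod.exists]
  constructor
  · rintro ⟨a, ha, b, hb, θ, hθ, rfl⟩
    exact ⟨θ, a, b, ⟨hθ, ha, hb⟩, rfl⟩
  · rintro ⟨θ, a, b, ⟨hθ, ha, hb⟩, rfl⟩
    exact ⟨a, ha, b, hb, θ, hθ, rfl⟩

theorem extremePoints_convexHull_subset_union_inter {x y₁ y₂ : Set E}
    (h : convexHull ℝ (x ∪ y₁) = convexHull ℝ (x ∪ y₂)) :
    (convexHull ℝ (x ∪ y₁)).extremePoints ℝ ⊆ x ∪ (y₁ ∩ y₂) := by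
  intro p hp
  have hp₁ : p ∈ x ∪ y₁ := extremePoints_convexHull_subset hp
  have hp₂ : p ∈ x ∪ y₂ := extremePoints_convexHull_subset (h ▸ hp)
  rw [union_inter_distrib_left]
  exact ⟨hp₁, hp₂⟩

section Compactness

variable [TopologicalSpace E] [ContinuousAdd E] [ContinuousSMul ℝ E] {s t : Set E}

theorem IsCompact.convexJoin (hs : IsCompact s) (ht : IsCompact t) :
    IsCompact (convexJoin ℝ s t) := by
  rw [convexJoin_eq_image]
  exact (isCompact_Icc.prod (hs.prod ht)).image (by fun_prop)

theorem IsCompact.convexHull_union (hs : IsCompact s) (ht : IsCompact t)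
    (hsc : Convex ℝ s) (htc : Convex ℝ t) : IsCompact (convexHull ℝ (s ∪ t)) := by
  rcases s.eq_empty_or_nonempty with rfl | hs₀
  · simpa [htc.convexHull_eq] using ht
  rcases t.eq_empty_or_nonempty with rfl | ht₀
  · simpa [hsc.convexHull_eq] using hs
  rw [hsc.convexHull_union htc hs₀ ht₀]
  exact hs.convexJoin ht

end Compactness

section KreinMilman

variable [TopologicalSpace E] [T2Space E] [IsTopologicalAddGroup E] [ContinuousSMul ℝ E]
  [LocallyConvexSpace ℝ E]

theorem IsCompact.subset_closure_convexHull_of_extremePoints_subset {K t : Set E}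
    (hK : IsCompact K) (hKc : Convex ℝ K) (h : K.extremePoints ℝ ⊆ t) :
    K ⊆ closure (convexHull ℝ t) :=
  (closure_convexHull_extremePoints hK hKc).symm.subset.trans
    (closure_mono (convexHull_mono h))

theorem convexHull_union_inter_eq_of_convexHull_union_eq {x y₁ y₂ : Set E}
    (hC : IsCompact (convexHull ℝ (x ∪ y₁))) (hD : IsClosed (convexHull ℝ (x ∪ (y₁ ∩ y₂))))
    (h : convexHull ℝ (x ∪ y₁) = convexHull ℝ (x ∪ y₂)) :
    convexHull ℝ (x ∪ y₁) = convexHull ℝ (x ∪ (y₁ ∩ y₂)) := by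
  refine Subset.antisymm ?_ (convexHull_mono (union_subset_union_right x inter_subset_left))
  rw [← hD.closure_eq]
  exact hC.subset_closure_convexHull_of_extremePoints_subset (convex_convexHull ℝ _)
    (extremePoints_convexHull_subset_union_inter h)

end KreinMilman

theorem conv_cpct_joinSemidistrib_general (n : ℕ)
    (x y₁ y₂ : Set (Fin n → ℝ))
    (hx : Convex ℝ x) (hy₁ : Convex ℝ y₁) (hy₂ : Convex ℝ y₂)
    (hxc : IsCompact x) (hy₁c : IsCompact y₁) (hy₂c : IsCompact y₂)
    (h : convexHull ℝ (x ∪ y₁) = convexHull ℝ (x ∪ y₂)) :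
    convexHull ℝ (x ∪ y₁) = convexHull ℝ (x ∪ (y₁ ∩ y₂)) :=
  convexHull_union_inter_eq_of_convexHull_union_eq (hxc.convexHull_union hy₁c hx hy₁)
    (hxc.convexHull_union (hy₁c.inter_right hy₂c.isClosed) hx (hy₁.inter hy₂)).isClosed h

/-- For every positive integer `n`, the lattice of compact convex subsets of `ℝⁿ` is
join semidistributive. -/
theorem conv_cpct_joinSemidistrib (n : ℕ) (hn : 0 < n)
    (x y₁ y₂ : Set (Fin n → ℝ))
    (hx : Convex ℝ x) (hy₁ : Convex ℝ y₁) (hy₂ : Convex ℝ y₂)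
    (hxc : IsCompact x) (hy₁c : IsCompact y₁) (hy₂c : IsCompact y₂)
    (h : convexHull ℝ (x ∪ y₁) = convexHull ℝ (x ∪ y₂)) :
    convexHull ℝ (x ∪ y₁) = convexHull ℝ (x ∪ (y₁ ∩ y₂)) :=
  conv_cpct_joinSemidistrib_general n x y₁ y₂ hx hy₁ hy₂ hxc hy₁c hy₂c h
end

section
/- For every integer n > 1, there exist nonempty, open, bounded, convex subsets y_1, …, y_{n+1} of ℝⁿ such that y_i ∩ y_j = ∅ for all i ≠ j, while there is a single convex set t with convexHull(y_i ∪ y_j) = t for all i ≠ j. (Thus these sets, together with ∅ as least element and t as greatest element, form a sublattice of Conv(ℝⁿ) isomorphic to the height-2 lattice M_{n+1}, so the lattice of open bounded convex subsets of ℝⁿ is not (n−1)-join or (n−1)-meet semidistributive.) -/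
open Finset

/-- Barycentric coordinates w.r.t. the standard simplex `conv{0, e_0, …, e_{n-1}}`. -/
noncomputable def lamb (n : ℕ) (k : Fin (n + 1)) (x : Fin n → ℝ) : ℝ :=
  Fin.cons (α := fun _ => ℝ) (1 - ∑ m, x m) x k

lemma lamb_zero (n : ℕ) (x : Fin n → ℝ) : lamb n 0 x = 1 - ∑ m, x m := rfl

lemma lamb_succ (n : ℕ) (m : Fin n) (x : Fin n → ℝ) : lamb n m.succ x = x m := by
  simp [lamb]

lemma lamb_continuous (n : ℕ) (k : Fin (n + 1)) : Continuous (lamb n k) := by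
  induction k using Fin.cases with
  | zero =>
      have h : lamb n 0 = fun x => 1 - ∑ m, x m := funext fun x => lamb_zero n x
      rw [h]
      exact continuous_const.sub (continuous_finset_sum _ fun m _ => continuous_apply m)
  | succ m =>
      have h : lamb n m.succ = fun x => x m := funext fun x => lamb_succ n m x
      rw [h]
      exact continuous_apply m

lemma lamb_affine (n : ℕ) (k : Fin (n + 1)) {a b : ℝ} (hab : a + b = 1) (x y : Fin n → ℝ) :
    lamb n k (a • x + b • y) = a * lamb n k x + b * lamb n k y := by
  induction k using Fin.cases with
  | zero =>
      simp only [lamb, Fin.cons_zero, Pi.add_apply, Pi.smul_apply, smul_eq_mul,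
        Finset.sum_add_distrib, ← Finset.mul_sum]
      linear_combination -hab
  | succ m =>
      simp only [lamb, Fin.cons_succ, Pi.add_apply, Pi.smul_apply, smul_eq_mul]

lemma lamb_sum (n : ℕ) (x : Fin n → ℝ) : ∑ k, lamb n k x = 1 := by
  rw [Fin.sum_univ_succ]
  simp [lamb]

lemma lamb_weights (n : ℕ) (μ : Fin (n + 1) → ℝ) (hμ : ∑ k, μ k = 1) (k : Fin (n + 1)) :
    lamb n k (fun m => μ m.succ) = μ k := by
  induction k using Fin.cases with
  | zero =>
      rw [Fin.sum_univ_succ] at hμ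
      simp only [lamb, Fin.cons_zero]
      linarith
  | succ m => simp [lamb]

/-- The thin open convex set hugging the facet opposite vertex `i`. -/
def Y (n : ℕ) (i : Fin (n + 1)) : Set (Fin n → ℝ) :=
  {x | 0 < lamb n i x ∧ ∀ k, k ≠ i → 2 * lamb n i x < lamb n k x}

/-- The open solid simplex. -/
def IT (n : ℕ) : Set (Fin n → ℝ) := {x | ∀ k, 0 < lamb n k x}

/-- The vertices of the simplex. -/
def vtx (n : ℕ) (k : Fin (n + 1)) : Fin n → ℝ :=
  fun m => if m.succ = k then 1 else 0

lemma lamb_vtx (n : ℕ) (l k : Fin (n + 1)) :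
    lamb n l (vtx n k) = if l = k then 1 else 0 := by
  have hs : ∑ j : Fin (n + 1), (if j = k then (1 : ℝ) else 0) = 1 := by
    simp [Finset.sum_ite_eq']
  exact lamb_weights n (fun j => if j = k then 1 else 0) hs l

lemma Y_pos {n : ℕ} {i : Fin (n + 1)} {x : Fin n → ℝ} (hx : x ∈ Y n i) (k : Fin (n + 1)) :
    0 < lamb n k x := by
  by_cases h : k = i
  · subst h; exact hx.1
  · linarith [hx.2 k h, hx.1]

lemma Y_subset_IT (n : ℕ) (i : Fin (n + 1)) : Y n i ⊆ IT n := fun _ hx k => Y_pos hx k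

lemma combo_lt {p1 p2 q1 q2 a b : ℝ} (ha : 0 ≤ a) (hb : 0 ≤ b) (hab : a + b = 1)
    (h1 : p1 < p2) (h2 : q1 < q2) : a * p1 + b * q1 < a * p2 + b * q2 := by
  rcases ha.eq_or_lt with h | h
  · have hb1 : b = 1 := by linarith
    simp [← h, hb1, h2]
  · have t1 := mul_lt_mul_of_pos_left h1 h
    have t2 := mul_le_mul_of_nonneg_left h2.le hb
    linarith

lemma Y_convex (n : ℕ) (i : Fin (n + 1)) : Convex ℝ (Y n i) := by
  intro x hx y hy a b ha hb hab
  constructor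
  · rw [lamb_affine n i hab]
    have := combo_lt ha hb hab hx.1 hy.1 (p1 := 0) (q1 := 0)
    simpa using this
  · intro k hk
    rw [lamb_affine n i hab, lamb_affine n k hab]
    have := combo_lt ha hb hab (hx.2 k hk) (hy.2 k hk)
    nlinarith [this]

lemma IT_convex (n : ℕ) : Convex ℝ (IT n) := by
  intro x hx y hy a b ha hb hab k
  rw [lamb_affine n k hab]
  have := combo_lt ha hb hab (hx k) (hy k) (p1 := 0) (q1 := 0)
  simpa using this

lemma IT_open (n : ℕ) : IsOpen (IT n) := by
  have : IT n = ⋂ k, {x | 0 < lamb n k x} := by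
    ext x; simp [IT, Set.mem_iInter]
  rw [this]
  exact isOpen_iInter_of_finite fun k => isOpen_lt continuous_const (lamb_continuous n k)

lemma Y_open (n : ℕ) (i : Fin (n + 1)) : IsOpen (Y n i) := by
  have : Y n i = {x | 0 < lamb n i x} ∩ ⋂ k, {x | k ≠ i → 2 * lamb n i x < lamb n k x} := by
    ext x; simp [Y, Set.mem_iInter]
  rw [this]
  refine (isOpen_lt continuous_const (lamb_continuous n i)).inter
    (isOpen_iInter_of_finite fun k => ?_)
  by_cases hk : k = i
  · simp [hk]
  · have : {x | k ≠ i → 2 * lamb n i x < lamb n k x} = {x | 2 * lamb n i x < lamb n k x} := by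
      ext x; simp [hk]
    rw [this]
    exact isOpen_lt (continuous_const.mul (lamb_continuous n i)) (lamb_continuous n k)

lemma Y_nonempty (n : ℕ) (hn : 0 < n) (i : Fin (n + 1)) : (Y n i).Nonempty := by
  set N : ℝ := (n : ℝ) with hNdef
  have hN : 1 ≤ N := Nat.one_le_cast.mpr hn
  have hNpos : 0 < N := by linarith
  set ε : ℝ := 1 / (4 * N) with hεdef
  have hε : 0 < ε := by positivity
  set μ : Fin (n + 1) → ℝ := fun k => if k = i then ε else (1 - ε) / N with hμdef
  have hsum : ∑ k, μ k = 1 := by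
    have h1 : ∀ k : Fin (n + 1), μ k = (1 - ε) / N + (if k = i then ε - (1 - ε) / N else 0) := by
      intro k; by_cases h : k = i <;> simp [hμdef, h]
    rw [Finset.sum_congr rfl fun k _ => h1 k, Finset.sum_add_distrib, Finset.sum_ite_eq']
    simp only [Finset.mem_univ, if_true, Finset.sum_const, Finset.card_univ, Fintype.card_fin,
      nsmul_eq_mul]
    have : ((n : ℝ) + 1) * ((1 - ε) / N) + (ε - (1 - ε) / N) = N * ((1 - ε) / N) + ε := by
      push_cast; ring
    rw [Nat.cast_add, Nat.cast_one, this, mul_div_cancel₀ _ (ne_of_gt hNpos)]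
    ring
  have hkey : 2 * ε < (1 - ε) / N := by
    rw [lt_div_iff₀ hNpos, hεdef]
    have h1 : 2 * (1 / (4 * N)) * N = 1 / 2 := by field_simp; ring
    have h2 : 1 / (4 * N) ≤ 1 / 4 := by
      rw [div_le_div_iff₀ (by positivity) (by norm_num)]
      linarith
    rw [h1]
    linarith
  refine ⟨fun m => μ m.succ, ?_, ?_⟩
  · rw [lamb_weights n μ hsum i]
    simp [hμdef, hε]
  · intro k hk
    rw [lamb_weights n μ hsum i, lamb_weights n μ hsum k]
    simpa [hμdef, hk] using hkey

lemma vtx_mem_closure (n : ℕ) (hn : 0 < n) {i k : Fin (n + 1)} (hk : k ≠ i) :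
    vtx n k ∈ closure (Y n i) := by
  obtain ⟨q, hq⟩ := Y_nonempty n hn i
  have hseg : openSegment ℝ (vtx n k) q ⊆ Y n i := by
    rintro z ⟨a, b, ha, hb, hab, rfl⟩
    have hvik : lamb n i (vtx n k) = 0 := by
      rw [lamb_vtx]; exact if_neg fun h => hk h.symm
    constructor
    · rw [lamb_affine n i hab, hvik]
      simpa using mul_pos hb hq.1
    · intro m hm
      rw [lamb_affine n i hab, lamb_affine n m hab, hvik]
      have h2 : (0 : ℝ) ≤ lamb n m (vtx n k) := by
        rw [lamb_vtx]; split <;> norm_num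
      have h3 := hq.2 m hm
      have t1 := mul_lt_mul_of_pos_left h3 hb
      have t2 : 0 ≤ a * lamb n m (vtx n k) := mul_nonneg ha.le h2
      nlinarith
  have h1 : vtx n k ∈ closure (openSegment ℝ (vtx n k) q) :=
    segment_subset_closure_openSegment (left_mem_segment ℝ (vtx n k) q)
  exact closure_mono hseg h1

lemma IT_subset_hull (n : ℕ) : IT n ⊆ convexHull ℝ (Set.range (vtx n)) := by
  intro x hx
  have hx' : x = ∑ k, lamb n k x • vtx n k := by
    funext m
    rw [Finset.sum_apply]
    simp only [Pi.smul_apply, vtx, smul_eq_mul, mul_ite, mul_one, mul_zero]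
    rw [Finset.sum_ite_eq]
    simp [lamb_succ]
  rw [hx']
  exact (convex_convexHull ℝ _).sum_mem (fun k _ => (hx k).le) (lamb_sum n x)
    (fun k _ => subset_convexHull ℝ _ (Set.mem_range_self k))

/-- For every `n > 1`, there are `n + 1` nonempty open bounded convex subsets of `ℝⁿ`,
pairwise disjoint, all of whose pairwise joins coincide with a single convex set `t`;
together with `∅` and `t` they form a copy of `M_{n+1}` in `Conv(ℝⁿ)`. -/
theorem conv_open_bounded_M_n_add_one (n : ℕ) (hn : 1 < n) :
    ∃ (y : Fin (n + 1) → Set (Fin n → ℝ)) (t : Set (Fin n → ℝ)),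
      (∀ i, (y i).Nonempty ∧ IsOpen (y i) ∧ Bornology.IsBounded (y i) ∧ Convex ℝ (y i)) ∧
      Convex ℝ t ∧
      (∀ i j, i ≠ j → y i ∩ y j = ∅) ∧
      (∀ i j, i ≠ j → convexHull ℝ (y i ∪ y j) = t) := by
  have hn0 : 0 < n := by omega
  refine ⟨Y n, IT n, ?_, IT_convex n, ?_, ?_⟩
  · intro i
    refine ⟨Y_nonempty n hn0 i, Y_open n i, ?_, Y_convex n i⟩
    have hsub : Y n i ⊆ Metric.closedBall 0 1 := by
      intro x hx
      rw [Metric.mem_closedBall, dist_zero_right]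
      rw [pi_norm_le_iff_of_nonneg zero_le_one]
      intro m
      rw [Real.norm_eq_abs, abs_le]
      have h0 : 0 < lamb n m.succ x := Y_pos hx m.succ
      have h1 : lamb n m.succ x ≤ 1 := by
        have := Finset.single_le_sum (f := fun k => lamb n k x)
          (fun j _ => (Y_pos hx j).le) (Finset.mem_univ m.succ)
        rw [lamb_sum] at this
        exact this
      rw [lamb_succ] at h0 h1
      constructor <;> linarith
    exact Metric.isBounded_closedBall.subset hsub
  · intro i j hij
    ext x
    simp only [Set.mem_inter_iff, Set.mem_empty_iff_false, iff_false]
    rintro ⟨hxi, hxj⟩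
    have h1 := hxi.2 j (Ne.symm hij)
    have h2 := hxj.2 i hij
    linarith [hxi.1]
  · intro i j hij
    apply Set.Subset.antisymm
    · exact convexHull_min (Set.union_subset (Y_subset_IT n i) (Y_subset_IT n j)) (IT_convex n)
    · intro z hz
      set S := convexHull ℝ (Y n i ∪ Y n j) with hS
      have hSconv : Convex ℝ S := convex_convexHull ℝ _
      have hVsub : Set.range (vtx n) ⊆ closure S := by
        rintro _ ⟨k, rfl⟩
        by_cases hk : k = i
        · subst hk
          exact closure_mono (Set.subset_union_right.trans (subset_convexHull ℝ _))
            (vtx_mem_closure n hn0 hij)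
        · exact closure_mono (Set.subset_union_left.trans (subset_convexHull ℝ _))
            (vtx_mem_closure n hn0 hk)
      have hITcl : IT n ⊆ closure S :=
        (IT_subset_hull n).trans (convexHull_min hVsub hSconv.closure)
      have hITint : IT n ⊆ interior (closure S) := interior_maximal hITcl (IT_open n)
      obtain ⟨p, hp⟩ := Y_nonempty n hn0 i
      have hpS : Y n i ⊆ S := Set.subset_union_left.trans (subset_convexHull ℝ _)
      have hpint : p ∈ interior S := interior_maximal hpS (Y_open n i) hp
      have hzU : z ∈ interior (closure S) := hITint hz
      have hcont : Continuous fun δ : ℝ => z + δ • (z - p) := by continuity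
      have hmem : (fun δ : ℝ => z + δ • (z - p)) ⁻¹' interior (closure S) ∈ nhds (0 : ℝ) :=
        (isOpen_interior.preimage hcont).mem_nhds (by simpa using hzU)
      obtain ⟨ε, hε, hball⟩ := Metric.mem_nhds_iff.mp hmem
      set d : ℝ := ε / 2 with hd
      have hdpos : 0 < d := by positivity
      have hw : z + d • (z - p) ∈ closure S := by
        have hmemball : d ∈ Metric.ball (0 : ℝ) ε := by
          rw [Metric.mem_ball, Real.dist_eq, sub_zero, abs_of_pos hdpos, hd]
          linarith
        exact interior_subset (hball hmemball)
      set b : ℝ := 1 / (1 + d) with hb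
      have h1d : (0 : ℝ) < 1 + d := by linarith
      have hbpos : 0 < b := by positivity
      have hb1 : b + b * d = 1 := by
        rw [hb]; field_simp
      have hab : b * d + b = 1 := by linarith
      have key : (b * d) • p + b • (z + d • (z - p)) = z := by
        have e1 : (b * d) • p + b • (z + d • (z - p)) = ((b * d) - b * d) • p + (b + b * d) • z := by
          module
        rw [e1, hb1, sub_self, zero_smul, one_smul, zero_add]
      have hin := hSconv.combo_interior_closure_mem_interior hpint hw
        (mul_pos hbpos hdpos) hbpos.le hab
      rw [key] at hin
      exact interior_subset hin
end
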